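/- arXiv:2001.04119 — 2 statements merged into one kernel-verified Lean document; each statement's English description precedes it below -/
import Mathlib

section
/- Let ε′ be obtained from ε by removing ε_i (with ε′ homogeneous if n = 4), and let 𝒱′ = tr^ε_{ε′}(𝒱). Then: (1) 𝒱′ is stable under the Ů(ε′)-action via the folding homomorphism φ and is isomorphic to the natural representation of Ů(ε′); (2) tr^ε_{ε′}(𝒱^{⊗ℓ}) is isomorphic to 𝒱′^{⊗ℓ} as a Ů(ε′)-module; in particular the actions of E_j, F_j, K_j (j ∈ I′∖{0}) on 𝒱′⊗𝒱′ equal those of K_j^{−1}⊗E_j + E_j⊗1, 1⊗F_j + F_j⊗K_j, and K_j⊗K_j respectively. -/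
/-! Generalized quantum group of affine type A (Kwon–Yu), common definitions.

Conventions:
* The base field is `K = ℚ(q)` with `qq = q`.
* The index set `𝕀 = {1,…,n}` is modeled 0-based by `Fin n`: the position `p : Fin n`
  represents the letter `p+1`; `ε : Fin n → Bool` with `ε p = true` meaning `ε_{p+1} = 1`.
* The affine index set `I = {0,1,…,n-1}` is modeled by `Fin n` (with cyclic arithmetic);
  for `i : Fin n`, the simple root is `α_i = δ_i - δ_{i+1}` (letters mod n), whose
  letters have 0-based positions `i - 1` and `i` (`Fin` subtraction is cyclic).
-/

set_option synthInstance.maxHeartbeats 1000000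
set_option maxHeartbeats 1600000

noncomputable section
open scoped TensorProduct

abbrev K : Type := RatFunc ℚ

/-- The indeterminate `q`. -/
def qq : K := RatFunc.X

/-- `q_p = (-1)^{ε_p} q^{(-1)^{ε_p}}` for the letter at (0-based) position `p`. -/
def qv {n : ℕ} (ε : Fin n → Bool) (p : Fin n) : K := if ε p then -qq⁻¹ else qq

/-- `(-1)^{ε_p}` as an integer. -/
def sgn {n : ℕ} (ε : Fin n → Bool) (p : Fin n) : ℤ := if ε p then -1 else 1

/-- `⟨α_i, δ_{p+1}^∨⟩`, where `i ∈ I` and `p` is a 0-based letter position. -/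
def apair {n : ℕ} [NeZero n] (i p : Fin n) : ℤ :=
  (if p = i - 1 then 1 else 0) - (if p = i then 1 else 0)

/-- the exponent of `ω_{p+1} = q^{(-1)^{ε_{p+1}} δ_{p+1}^∨}` as an element of `P^∨ = ℤ^n`. -/
def ωexp {n : ℕ} (ε : Fin n → Bool) (p : Fin n) : Fin n → ℤ :=
  fun r => if r = p then sgn ε p else 0

/-- the exponent of `k_i = ω_i ω_{i+1}^{-1}` in `P^∨`. -/
def κe {n : ℕ} [NeZero n] (ε : Fin n → Bool) (i : Fin n) : Fin n → ℤ :=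
  ωexp ε (i - 1) - ωexp ε i

/-- `D_{ij} = q_i^{⟨α_j,δ_i^∨⟩} q_{i+1}^{-⟨α_j,δ_{i+1}^∨⟩}`. -/
def Dc {n : ℕ} [NeZero n] (ε : Fin n → Bool) (i j : Fin n) : K :=
  qv ε (i - 1) ^ apair j (i - 1) * qv ε i ^ (-apair j i)

/-- `[2] = q + q⁻¹`. -/
def brk2 : K := qq + qq⁻¹

/-- `i ∈ I_odd`, i.e. `(α_i|α_i) = 0`, i.e. `ε_i ≠ ε_{i+1}`. -/
def oddI {n : ℕ} [NeZero n] (ε : Fin n → Bool) (i : Fin n) : Prop := ε (i - 1) ≠ ε i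

/-- `(-1)^{ε_i}` for `i ∈ I`, as a scalar. -/
def signI {n : ℕ} [NeZero n] (ε : Fin n → Bool) (i : Fin n) : K := if ε (i - 1) then -1 else 1

/-- cyclic adjacency in the affine Dynkin diagram of `I = ℤ/n`. -/
def adjI {n : ℕ} [NeZero n] (i j : Fin n) : Prop := j = i + 1 ∨ i = j + 1

/-! ### The natural module `𝒱` and its tensor powers, concretely.

`𝒱^{⊗ℓ}` is modeled as the space `Vl n ℓ = (Fin ℓ → Fin n) → K` of coefficient functions on
multi-indices; the basis vector `v_{m_0} ⊗ ⋯ ⊗ v_{m_{ℓ-1}}` is `Pi.single m 1`.  The action of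
the generators of `Ů(ε)` (and of `U(ε)`) obtained from the comultiplication
`Δ(e_i) = e_i ⊗ 1 + k_i^{-1} ⊗ e_i`, `Δ(f_i) = f_i ⊗ k_i + 1 ⊗ f_i`, `Δ(q^h) = q^h ⊗ q^h`
is written out explicitly below. -/

/-- A linear endomorphism of a coefficient space `M → K` given by
`g ↦ (m ↦ c₁ m * g m + c₂ m * g (σ m))`. -/
def twoTerm {M : Type} (c₁ c₂ : M → K) (σ : M → M) : Module.End K (M → K) where
  toFun g := fun m => c₁ m * g m + c₂ m * g (σ m)
  map_add' g h := by funext m; simp only [Pi.add_apply]; ring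
  map_smul' a g := by
    funext m; simp only [Pi.smul_apply, smul_eq_mul, RingHom.id_apply]; ring

abbrev Vl (n ℓ : ℕ) : Type := (Fin ℓ → Fin n) → K

/-- diagonal entry of `k_i` at a letter position `p`. -/
def kEntry {n : ℕ} [NeZero n] (ε : Fin n → Bool) (i p : Fin n) : K :=
  (if p = i - 1 then qv ε (i - 1) else 1) * (if p = i then (qv ε i)⁻¹ else 1)

/-- diagonal entry of `k_i^{-1}` at a letter position `p`. -/
def kinvEntry {n : ℕ} [NeZero n] (ε : Fin n → Bool) (i p : Fin n) : K :=
  (if p = i - 1 then (qv ε (i - 1))⁻¹ else 1) * (if p = i then qv ε i else 1)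

/-- diagonal entry of `q^h` at a letter position `p` (recall `ω_p = q^{(-1)^{ε_p} δ_p^∨}`
acts on `v_p` by `q_p`). -/
def qhEntry {n : ℕ} (ε : Fin n → Bool) (h : Fin n → ℤ) (p : Fin n) : K :=
  qv ε p ^ (sgn ε p * h p)

/-- the action of `e_i` on `𝒱^{⊗ℓ}` via `Δ`. -/
def eOpL (n ℓ : ℕ) [NeZero n] (ε : Fin n → Bool) (i : Fin n) : Module.End K (Vl n ℓ) :=
  ∑ t : Fin ℓ, twoTerm 0
    (fun m => if m t = i - 1 then ∏ s ∈ Finset.univ.filter (fun s => s < t), kinvEntry ε i (m s) else 0)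
    (fun m => Function.update m t i)

/-- the action of `f_i` on `𝒱^{⊗ℓ}` via `Δ`. -/
def fOpL (n ℓ : ℕ) [NeZero n] (ε : Fin n → Bool) (i : Fin n) : Module.End K (Vl n ℓ) :=
  ∑ t : Fin ℓ, twoTerm 0
    (fun m => if m t = i then ∏ s ∈ Finset.univ.filter (fun s => t < s), kEntry ε i (m s) else 0)
    (fun m => Function.update m t (i - 1))

/-- the action of `q^h` on `𝒱^{⊗ℓ}` via `Δ`. -/
def qhOpL (n ℓ : ℕ) (ε : Fin n → Bool) (h : Fin n → ℤ) : Module.End K (Vl n ℓ) :=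
  twoTerm (fun m => ∏ t : Fin ℓ, qhEntry ε h (m t)) 0 id

/-- The `R` matrix of (3.1) acting on the tensor factors `t, t+1` of `𝒱^{⊗ℓ}`:
`R(v_i ⊗ v_j) = q⁻¹ q_i⁻¹ v_i ⊗ v_j` (`i = j`), `q⁻¹ v_j ⊗ v_i` (`i > j`),
`(q⁻² − 1) v_i ⊗ v_j + q⁻¹ v_j ⊗ v_i` (`i < j`). -/
def Rsite (n ℓ : ℕ) [NeZero n] (ε : Fin n → Bool) (t : Fin (ℓ - 1)) :
    Module.End K (Vl n ℓ) :=
  have h1 : (t : ℕ) + 1 < ℓ := by have := t.isLt; omega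
  have h0 : (t : ℕ) < ℓ := by omega
  twoTerm
    (fun m => if m ⟨t, h0⟩ = m ⟨t + 1, h1⟩ then qq⁻¹ * (qv ε (m ⟨t, h0⟩))⁻¹
      else if m ⟨t, h0⟩ < m ⟨t + 1, h1⟩ then qq⁻¹ * qq⁻¹ - 1 else 0)
    (fun m => if m ⟨t, h0⟩ = m ⟨t + 1, h1⟩ then 0 else qq⁻¹)
    (fun m => fun s => if s = ⟨t, h0⟩ then m ⟨t + 1, h1⟩
      else if s = ⟨t + 1, h1⟩ then m ⟨t, h0⟩ else m s)

/-- The image `Φ_ℓ(Ů(ε)) ⊆ End(𝒱^{⊗ℓ})` of the subalgebra `Ů(ε)` of `U(ε)` generated by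
`q^h (h ∈ P^∨)` and `e_i, f_i (i ∈ I∖{0})`: it is the subalgebra generated by the images
of these generators. -/
def UimageL (n ℓ : ℕ) [NeZero n] (ε : Fin n → Bool) : Subalgebra K (Module.End K (Vl n ℓ)) :=
  Algebra.adjoin K
    ({x | ∃ h : Fin n → ℤ, x = qhOpL n ℓ ε h} ∪
     {x | ∃ i : Fin n, i ≠ 0 ∧ (x = eOpL n ℓ ε i ∨ x = fOpL n ℓ ε i)})

/-- The image `Ψ_ℓ(ℋ_ℓ(q^{-2})) ⊆ End(𝒱^{⊗ℓ})` of the Iwahori–Hecke algebra: the subalgebra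
generated by the operators `Ψ_ℓ(h_i)`. -/
def HimageL (n ℓ : ℕ) [NeZero n] (ε : Fin n → Bool) : Subalgebra K (Module.End K (Vl n ℓ)) :=
  Algebra.adjoin K {x | ∃ t : Fin (ℓ - 1), x = Rsite n ℓ ε t}

/-! ### The fundamental-type modules `W_{s,ε}(x)` and their tensor products, concretely.

`W_{s,ε}(x)` is modeled inside the ambient coefficient space `WA n = (Fin n → ℕ) → K` as the
span `Wspan n ε s` of the basis vectors `|m⟩ = Pi.single m 1` for `m ∈ ℤ_+^n(ε)` with
`|m| = s`.  The generators act by the explicit formulas of Section 4.1 of Kwon–Yu. -/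

/-- A linear endomorphism of a coefficient space given by two shift terms. -/
def shift2 {M : Type} (c₁ c₂ : M → K) (σ₁ σ₂ : M → M) : Module.End K (M → K) where
  toFun g := fun m => c₁ m * g (σ₁ m) + c₂ m * g (σ₂ m)
  map_add' g h := by funext m; simp only [Pi.add_apply]; ring
  map_smul' a g := by
    funext m; simp only [Pi.smul_apply, smul_eq_mul, RingHom.id_apply]; ring

abbrev WA (n : ℕ) : Type := (Fin n → ℕ) → K

/-- `ℤ_+^n(ε)` with `|m| = s`. -/
def MsetP (n : ℕ) (ε : Fin n → Bool) (s : ℕ) : Set (Fin n → ℕ) :=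
  {m | (∀ p, ε p = true → m p ≤ 1) ∧ ∑ p, m p = s}

/-- The subspace `W_{s,ε} ⊆ WA n`. -/
def Wspan (n : ℕ) (ε : Fin n → Bool) (s : ℕ) : Submodule K (WA n) :=
  Submodule.span K {g | ∃ m ∈ MsetP n ε s, g = Pi.single m 1}

/-- `[k] = (q^k - q^{-k})/(q - q⁻¹)`. -/
def brk (k : ℕ) : K := (qq ^ (k : ℤ) - qq ^ (-(k : ℤ))) / (qq - qq⁻¹)

/-- `e_i`-coefficient, written from the *output* index `m`: the matrix entry of `e_i`
between `|m - e_i + e_{i+1}⟩` and `|m⟩`. -/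
def cE {n : ℕ} [NeZero n] (ε : Fin n → Bool) (x : K) (i : Fin n) (m : Fin n → ℕ) : K :=
  if 1 ≤ m (i - 1) ∧ (ε (i - 1) = true → m (i - 1) = 1) then
    (if i = 0 then x else 1) * qq ^ ((m i : ℤ) - (m (i - 1) : ℤ) + 1) * brk (m i + 1)
  else 0

/-- the source index of `e_i` from the output index: `m - e_i + e_{i+1}` (letterwise). -/
def σE {n : ℕ} [NeZero n] (i : Fin n) (m : Fin n → ℕ) : Fin n → ℕ :=
  Function.update (Function.update m (i - 1) (m (i - 1) - 1)) i (m i + 1)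

/-- `f_i`-coefficient from the output index `m`. -/
def cF {n : ℕ} [NeZero n] (ε : Fin n → Bool) (x : K) (i : Fin n) (m : Fin n → ℕ) : K :=
  if 1 ≤ m i ∧ (ε i = true → m i = 1) then
    (if i = 0 then x⁻¹ else 1) * qq ^ ((m (i - 1) : ℤ) - (m i : ℤ) + 1) * brk (m (i - 1) + 1)
  else 0

/-- the source index of `f_i` from the output index: `m + e_i - e_{i+1}`. -/
def σF {n : ℕ} [NeZero n] (i : Fin n) (m : Fin n → ℕ) : Fin n → ℕ :=
  Function.update (Function.update m (i - 1) (m (i - 1) + 1)) i (m i - 1)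

/-- eigenvalue of `q^h` on `|m⟩`. -/
def qhW {n : ℕ} (ε : Fin n → Bool) (h : Fin n → ℤ) (m : Fin n → ℕ) : K :=
  ∏ p : Fin n, qv ε p ^ (sgn ε p * h p * (m p : ℤ))

/-- eigenvalue of `k_i` on `|m⟩`. -/
def kW {n : ℕ} [NeZero n] (ε : Fin n → Bool) (i : Fin n) (m : Fin n → ℕ) : K :=
  qv ε (i - 1) ^ ((m (i - 1) : ℤ)) * qv ε i ^ (-(m i : ℤ))

/-- eigenvalue of `k_i⁻¹` on `|m⟩`. -/
def kinvW {n : ℕ} [NeZero n] (ε : Fin n → Bool) (i : Fin n) (m : Fin n → ℕ) : K :=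
  qv ε (i - 1) ^ (-(m (i - 1) : ℤ)) * qv ε i ^ ((m i : ℤ))

/-- the action of `e_i` on `W_{s,ε}(x)` (on the ambient space `WA n`). -/
def eWop (n : ℕ) [NeZero n] (ε : Fin n → Bool) (x : K) (i : Fin n) : Module.End K (WA n) :=
  shift2 (cE ε x i) 0 (σE i) id

/-- the action of `f_i` on `W_{s,ε}(x)`. -/
def fWop (n : ℕ) [NeZero n] (ε : Fin n → Bool) (x : K) (i : Fin n) : Module.End K (WA n) :=
  shift2 (cF ε x i) 0 (σF i) id

/-- the action of `q^h` on `W_{s,ε}(x)`. -/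
def qhWop (n : ℕ) (ε : Fin n → Bool) (h : Fin n → ℤ) : Module.End K (WA n) :=
  shift2 (qhW ε h) 0 id id

/-! #### Tensor products `W_{l,ε}(x) ⊗ W_{m,ε}(y)`, modeled on
`PW n = ((Fin n → ℕ) × (Fin n → ℕ)) → K`, with the comultiplication
`Δ(e_i) = e_i ⊗ 1 + k_i^{-1} ⊗ e_i`, `Δ(f_i) = f_i ⊗ k_i + 1 ⊗ f_i`, `Δ(q^h) = q^h ⊗ q^h`,
and the opposite comultiplication `Δ^op`. -/

abbrev PW (n : ℕ) : Type := ((Fin n → ℕ) × (Fin n → ℕ)) → K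

def PairSpan (n : ℕ) (ε : Fin n → Bool) (l m : ℕ) : Submodule K (PW n) :=
  Submodule.span K
    {g | ∃ m₁ ∈ MsetP n ε l, ∃ m₂ ∈ MsetP n ε m, g = Pi.single (m₁, m₂) 1}

/-- `Δ(e_i)` on `W_{·,ε}(x) ⊗ W_{·,ε}(y)`. -/
def ePair (n : ℕ) [NeZero n] (ε : Fin n → Bool) (x y : K) (i : Fin n) : Module.End K (PW n) :=
  shift2 (fun p => cE ε x i p.1) (fun p => kinvW ε i p.1 * cE ε y i p.2)
    (fun p => (σE i p.1, p.2)) (fun p => (p.1, σE i p.2))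

/-- `Δ(f_i)`. -/
def fPair (n : ℕ) [NeZero n] (ε : Fin n → Bool) (x y : K) (i : Fin n) : Module.End K (PW n) :=
  shift2 (fun p => cF ε x i p.1 * kW ε i p.2) (fun p => cF ε y i p.2)
    (fun p => (σF i p.1, p.2)) (fun p => (p.1, σF i p.2))

/-- `Δ(q^h)`. -/
def qhPair (n : ℕ) (ε : Fin n → Bool) (h : Fin n → ℤ) : Module.End K (PW n) :=
  shift2 (fun p => qhW ε h p.1 * qhW ε h p.2) 0 id id

/-- `Δ^op(e_i) = 1 ⊗ e_i + e_i ⊗ k_i^{-1}`. -/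
def ePairOp (n : ℕ) [NeZero n] (ε : Fin n → Bool) (x y : K) (i : Fin n) : Module.End K (PW n) :=
  shift2 (fun p => cE ε y i p.2) (fun p => cE ε x i p.1 * kinvW ε i p.2)
    (fun p => (p.1, σE i p.2)) (fun p => (σE i p.1, p.2))

/-- `Δ^op(f_i) = k_i ⊗ f_i + f_i ⊗ 1`. -/
def fPairOp (n : ℕ) [NeZero n] (ε : Fin n → Bool) (x y : K) (i : Fin n) : Module.End K (PW n) :=
  shift2 (fun p => kW ε i p.1 * cF ε y i p.2) (fun p => cF ε x i p.1)
    (fun p => (p.1, σF i p.2)) (fun p => (σF i p.1, p.2))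

/-- the flip `P(a ⊗ b) = b ⊗ a` on `PW n`. -/
def Pflip (n : ℕ) : Module.End K (PW n) where
  toFun g := fun p => g (p.2, p.1)
  map_add' g h := by funext m; simp
  map_smul' a g := by funext m; simp

/-- the basis vector `|s e_{p+1}⟩` (all boxes at the letter position `p`). -/
def unitM (n : ℕ) (s : ℕ) (p : Fin n) : Fin n → ℕ := fun r => if r = p then s else 0

/-- number of `0`s in `ε`. -/
def Mcount {n : ℕ} (ε : Fin n → Bool) : ℕ := (Finset.univ.filter fun p => ε p = false).card
/-- number of `1`s in `ε`. -/
def Ncount {n : ℕ} (ε : Fin n → Bool) : ℕ := (Finset.univ.filter fun p => ε p = true).card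

/-- the one-row partition `(s)` is an `(M|N)`-hook partition. -/
def hookRow {n : ℕ} (ε : Fin n → Bool) (s : ℕ) : Prop :=
  Mcount ε = 0 → s ≤ Ncount ε

/-! #### Folded operators: the action of the elements `K_j, E_j, F_j ∈ U(ε)`
(Theorem 4.3) on a `U(ε)`-module whose generator actions are given. -/

/-- the action of `E_j = φ(e'_j)` given the actions `Eop i` of the `e_i`. -/
def foldCombE {V : Type} [AddCommGroup V] [Module K V] {n' : ℕ} [NeZero n']
    (ε : Fin (n' + 1) → Bool) (Eop : Fin (n' + 1) → Module.End K V) (p : Fin (n' + 1))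
    (j : Fin n') : Module.End K V :=
  if (p : ℕ) = 0 then
    (if (j : ℕ) = 0 then Eop 0 * Eop 1 - Dc ε 0 1 • (Eop 1 * Eop 0) else Eop j.succ)
  else if (p : ℕ) = n' then
    (if (j : ℕ) = 0 then
        Eop (Fin.last n') * Eop 0 - Dc ε (Fin.last n') 0 • (Eop 0 * Eop (Fin.last n'))
      else Eop j.castSucc)
  else
    (if (j : ℕ) < (p : ℕ) then Eop j.castSucc
     else if (j : ℕ) = (p : ℕ) then
        Eop j.castSucc * Eop j.succ - Dc ε j.castSucc j.succ • (Eop j.succ * Eop j.castSucc)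
     else Eop j.succ)

/-- the action of `F_j = φ(f'_j)` given the actions `Fop i` of the `f_i`. -/
def foldCombF {V : Type} [AddCommGroup V] [Module K V] {n' : ℕ} [NeZero n']
    (ε : Fin (n' + 1) → Bool) (Fop : Fin (n' + 1) → Module.End K V) (p : Fin (n' + 1))
    (j : Fin n') : Module.End K V :=
  if (p : ℕ) = 0 then
    (if (j : ℕ) = 0 then Fop 1 * Fop 0 - (Dc ε 0 1)⁻¹ • (Fop 0 * Fop 1) else Fop j.succ)
  else if (p : ℕ) = n' then
    (if (j : ℕ) = 0 then
        Fop 0 * Fop (Fin.last n') - (Dc ε (Fin.last n') 0)⁻¹ • (Fop (Fin.last n') * Fop 0)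
      else Fop j.castSucc)
  else
    (if (j : ℕ) < (p : ℕ) then Fop j.castSucc
     else if (j : ℕ) = (p : ℕ) then
        Fop j.succ * Fop j.castSucc -
          (Dc ε j.castSucc j.succ)⁻¹ • (Fop j.castSucc * Fop j.succ)
     else Fop j.succ)

/-- the action of `K_j = φ(k'_j)` given the actions `Kop i` of the `k_i` (for `K_j⁻¹`,
apply to the actions of the `k_i⁻¹`). -/
def foldCombK {V : Type} [AddCommGroup V] [Module K V] {n' : ℕ} [NeZero n']
    (Kop : Fin (n' + 1) → Module.End K V) (p : Fin (n' + 1)) (j : Fin n') :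
    Module.End K V :=
  if (p : ℕ) = 0 then
    (if (j : ℕ) = 0 then Kop 0 * Kop 1 else Kop j.succ)
  else if (p : ℕ) = n' then
    (if (j : ℕ) = 0 then Kop (Fin.last n') * Kop 0 else Kop j.castSucc)
  else
    (if (j : ℕ) < (p : ℕ) then Kop j.castSucc
     else if (j : ℕ) = (p : ℕ) then Kop j.castSucc * Kop j.succ
     else Kop j.succ)

/-! #### The natural module `𝒱` (single site) and operators acting in one tensor slot. -/

/-- `e_i` on `𝒱`: `e_i v_j = δ_{i,j-1} v_{j-1}` (0-based positions: `i ↤ i-1`). -/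
def eNat (n : ℕ) [NeZero n] (i : Fin n) : Module.End K (Fin n → K) :=
  shift2 (fun p => if p = i - 1 then (1 : K) else 0) 0 (fun _ => i) id

/-- `f_i` on `𝒱`: `f_i v_j = δ_{ij} v_{j+1}`. -/
def fNat (n : ℕ) [NeZero n] (i : Fin n) : Module.End K (Fin n → K) :=
  shift2 (fun p => if p = i then (1 : K) else 0) 0 (fun _ => i - 1) id

/-- `k_i` on `𝒱` (diagonal). -/
def kNat (n : ℕ) [NeZero n] (ε : Fin n → Bool) (i : Fin n) : Module.End K (Fin n → K) :=
  shift2 (kEntry ε i) 0 id id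

/-- `k_i⁻¹` on `𝒱` (diagonal). -/
def kinvNat (n : ℕ) [NeZero n] (ε : Fin n → Bool) (i : Fin n) : Module.End K (Fin n → K) :=
  shift2 (kinvEntry ε i) 0 id id

/-- an endomorphism of `𝒱` acting in the `t`-th tensor slot of `𝒱^{⊗r}`. -/
def slotOp {n r : ℕ} (A : Module.End K (Fin n → K)) (t : Fin r) : Module.End K (Vl n r) where
  toFun g := fun μ => A (fun c => g (Function.update μ t c)) (μ t)
  map_add' g h := by
    funext μ
    show A ((fun c => g (Function.update μ t c)) + fun c => h (Function.update μ t c)) (μ t) = _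
    rw [map_add]; rfl
  map_smul' a g := by
    funext μ
    show A (a • fun c => g (Function.update μ t c)) (μ t) = _
    rw [map_smul]; rfl

/-- the `ℓ`-fold action of `k_i` on `𝒱^{⊗ℓ}` (diagonal). -/
def kOpL (n ℓ : ℕ) [NeZero n] (ε : Fin n → Bool) (i : Fin n) : Module.End K (Vl n ℓ) :=
  qhOpL n ℓ ε (κe ε i)

/-- the `ℓ`-fold action of `k_i⁻¹` on `𝒱^{⊗ℓ}` (diagonal). -/
def kinvOpL (n ℓ : ℕ) [NeZero n] (ε : Fin n → Bool) (i : Fin n) : Module.End K (Vl n ℓ) :=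
  qhOpL n ℓ ε (-κe ε i)

set_option linter.unusedSectionVars false

namespace KY44

lemma one_val {m : ℕ} [NeZero m] (hm : 2 ≤ m) : ((1 : Fin m) : ℕ) = 1 := by
  rw [Fin.val_one']; exact Nat.mod_eq_of_lt hm

lemma val_ne_zero {m : ℕ} [NeZero m] (a : Fin m) (ha : a ≠ 0) : (a : ℕ) ≠ 0 := by
  intro h; exact ha (Fin.ext (by simp [h]))

lemma sub_one_val {m : ℕ} [NeZero m] (hm : 2 ≤ m) (a : Fin m) (ha : a ≠ 0) :
    ((a - 1 : Fin m) : ℕ) = (a : ℕ) - 1 := by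
  have h1 : ((1 : Fin m) : ℕ) = 1 := one_val hm
  have ha' : (a : ℕ) ≠ 0 := val_ne_zero a ha
  have hlt := a.isLt
  rw [Fin.sub_def]
  show ((m - ((1 : Fin m) : ℕ)) + (a : ℕ)) % m = (a : ℕ) - 1
  rw [h1]
  have h2 : (m - 1) + (a : ℕ) = m + ((a : ℕ) - 1) := by omega
  rw [h2, Nat.add_mod_left, Nat.mod_eq_of_lt (by omega)]

/-- letter embedding `Fin n' → Fin (n'+1)` skipping `p`. -/
def emb {n' : ℕ} (p : Fin (n' + 1)) (x : Fin n') : Fin (n' + 1) :=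
  if (x : ℕ) < (p : ℕ) then x.castSucc else x.succ

lemma emb_val {n' : ℕ} (p : Fin (n' + 1)) (x : Fin n') :
    ((emb p x : Fin (n' + 1)) : ℕ) = if (x : ℕ) < (p : ℕ) then (x : ℕ) else (x : ℕ) + 1 := by
  unfold emb; split <;> simp

lemma emb_ne {n' : ℕ} (p : Fin (n' + 1)) (x : Fin n') : emb p x ≠ p := by
  intro h
  have := congrArg Fin.val h
  rw [emb_val] at this
  split at this <;> omega

lemma emb_inj {n' : ℕ} {p : Fin (n' + 1)} {x y : Fin n'} : emb p x = emb p y ↔ x = y := by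
  constructor
  · intro h
    have := congrArg Fin.val h
    rw [emb_val, emb_val] at this
    apply Fin.ext
    split at this <;> split at this <;> omega
  · rintro rfl; rfl

lemma emb_surj {n' : ℕ} (p r : Fin (n' + 1)) (hr : r ≠ p) : ∃ x : Fin n', emb p x = r := by
  have hrv : (r : ℕ) ≠ (p : ℕ) := fun h => hr (Fin.ext h)
  have hrlt := r.isLt
  have hplt := p.isLt
  by_cases h : (r : ℕ) < (p : ℕ)
  · refine ⟨⟨(r : ℕ), by omega⟩, Fin.ext ?_⟩
    rw [emb_val]
    exact if_pos h
  · refine ⟨⟨(r : ℕ) - 1, by omega⟩, Fin.ext ?_⟩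
    rw [emb_val]
    show (if (r:ℕ) - 1 < (p:ℕ) then (r:ℕ) - 1 else (r:ℕ) - 1 + 1) = (r:ℕ)
    rw [if_neg (by omega)]
    omega

lemma twoTerm_apply {M : Type} (c₁ c₂ : M → K) (σ : M → M) (g : M → K) (m : M) :
    twoTerm c₁ c₂ σ g m = c₁ m * g m + c₂ m * g (σ m) := rfl

lemma shift2_apply {M : Type} (c₁ c₂ : M → K) (σ₁ σ₂ : M → M) (g : M → K) (m : M) :
    shift2 c₁ c₂ σ₁ σ₂ g m = c₁ m * g (σ₁ m) + c₂ m * g (σ₂ m) := rfl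

section Ops

variable {n' : ℕ} [NeZero n'] (ε : Fin (n' + 1) → Bool)

lemma n'pos : 1 ≤ n' := Nat.one_le_iff_ne_zero.mpr (NeZero.ne n')

lemma sub_one_ne (i : Fin (n' + 1)) : i - 1 ≠ i := by
  intro h
  rw [sub_eq_self] at h
  have := one_val (m := n' + 1) (by have := n'pos (n' := n'); omega)
  rw [h] at this
  simp at this

lemma eOpL_apply (ℓ : ℕ) (i : Fin (n' + 1)) (g : Vl (n' + 1) ℓ) (μ : Fin ℓ → Fin (n' + 1)) :
    eOpL (n' + 1) ℓ ε i g μ =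
      ∑ t : Fin ℓ, (if μ t = i - 1 then
          ∏ s ∈ Finset.univ.filter (fun s => s < t), kinvEntry ε i (μ s) else 0) *
        g (Function.update μ t i) := by
  simp only [eOpL, LinearMap.sum_apply, Finset.sum_apply, twoTerm_apply, Pi.zero_apply,
    zero_mul, zero_add]

lemma fOpL_apply (ℓ : ℕ) (i : Fin (n' + 1)) (g : Vl (n' + 1) ℓ) (μ : Fin ℓ → Fin (n' + 1)) :
    fOpL (n' + 1) ℓ ε i g μ =
      ∑ t : Fin ℓ, (if μ t = i then
          ∏ s ∈ Finset.univ.filter (fun s => t < s), kEntry ε i (μ s) else 0) *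
        g (Function.update μ t (i - 1)) := by
  simp only [fOpL, LinearMap.sum_apply, Finset.sum_apply, twoTerm_apply, Pi.zero_apply,
    zero_mul, zero_add]

lemma qhOpL_apply (ℓ : ℕ) (h : Fin (n' + 1) → ℤ) (g : Vl (n' + 1) ℓ)
    (μ : Fin ℓ → Fin (n' + 1)) :
    qhOpL (n' + 1) ℓ ε h g μ = (∏ t : Fin ℓ, qhEntry ε h (μ t)) * g μ := by
  simp only [qhOpL, twoTerm_apply, Pi.zero_apply, zero_mul, add_zero, id_eq]

lemma sgn_mul_self (r : Fin (n' + 1)) : sgn ε r * sgn ε r = 1 := by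
  unfold sgn; split <;> norm_num

lemma qhEntry_κe (i r : Fin (n' + 1)) : qhEntry ε (κe ε i) r = kEntry ε i r := by
  have hne : i - 1 ≠ i := sub_one_ne i
  simp only [qhEntry, κe, ωexp, kEntry, Pi.sub_apply]
  by_cases h1 : r = i - 1
  · subst h1
    rw [if_pos rfl, if_pos rfl, if_neg hne, if_neg hne, sub_zero, sgn_mul_self, zpow_one, mul_one]
  · by_cases h2 : r = i
    · subst h2
      rw [if_neg h1, if_pos rfl, if_neg h1, if_pos rfl, zero_sub, mul_neg, sgn_mul_self,
        zpow_neg, zpow_one, one_mul]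
    · rw [if_neg h1, if_neg h2, if_neg h1, if_neg h2, sub_zero, mul_zero, zpow_zero, one_mul]

lemma kOpL_apply (ℓ : ℕ) (i : Fin (n' + 1)) (g : Vl (n' + 1) ℓ) (μ : Fin ℓ → Fin (n' + 1)) :
    kOpL (n' + 1) ℓ ε i g μ = (∏ t : Fin ℓ, kEntry ε i (μ t)) * g μ := by
  rw [kOpL, qhOpL_apply]
  congr 1
  exact Finset.prod_congr rfl fun t _ => qhEntry_κe ε i (μ t)

lemma kNat_apply (i r : Fin (n' + 1)) (g : Fin (n' + 1) → K) :
    kNat (n' + 1) ε i g r = kEntry ε i r * g r := by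
  show kEntry ε i r * g r + 0 * g r = _
  rw [zero_mul, add_zero]

lemma kinvNat_apply (i r : Fin (n' + 1)) (g : Fin (n' + 1) → K) :
    kinvNat (n' + 1) ε i g r = kinvEntry ε i r * g r := by
  show kinvEntry ε i r * g r + 0 * g r = _
  rw [zero_mul, add_zero]

lemma eNat_apply (i r : Fin (n' + 1)) (g : Fin (n' + 1) → K) :
    eNat (n' + 1) i g r = (if r = i - 1 then (1:K) else 0) * g i := by
  show _ + (0:K) * g r = _
  rw [zero_mul, add_zero]

lemma fNat_apply (i r : Fin (n' + 1)) (g : Fin (n' + 1) → K) :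
    fNat (n' + 1) i g r = (if r = i then (1:K) else 0) * g (i - 1) := by
  show _ + (0:K) * g r = _
  rw [zero_mul, add_zero]

section Fold

variable {V : Type} [AddCommGroup V] [Module K V] (p : Fin (n' + 1)) (j : Fin n')

lemma foldE_noncomm (Eop : Fin (n' + 1) → Module.End K V)
    (hj : (j : ℕ) ≠ 0) (hjp : (j : ℕ) ≠ (p : ℕ)) :
    foldCombE ε Eop p j = Eop (emb p j) := by
  unfold foldCombE emb
  by_cases h0 : (p : ℕ) = 0
  · rw [if_pos h0, if_neg hj, if_neg (by omega)]
  · rw [if_neg h0]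
    by_cases hn : (p : ℕ) = n'
    · rw [if_pos hn, if_neg hj, if_pos (by have := j.isLt; omega)]
    · rw [if_neg hn]
      by_cases hlt : (j : ℕ) < (p : ℕ)
      · rw [if_pos hlt, if_pos hlt]
      · rw [if_neg hlt, if_neg hjp, if_neg hlt]

lemma foldF_noncomm (Fop : Fin (n' + 1) → Module.End K V)
    (hj : (j : ℕ) ≠ 0) (hjp : (j : ℕ) ≠ (p : ℕ)) :
    foldCombF ε Fop p j = Fop (emb p j) := by
  unfold foldCombF emb
  by_cases h0 : (p : ℕ) = 0
  · rw [if_pos h0, if_neg hj, if_neg (by omega)]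
  · rw [if_neg h0]
    by_cases hn : (p : ℕ) = n'
    · rw [if_pos hn, if_neg hj, if_pos (by have := j.isLt; omega)]
    · rw [if_neg hn]
      by_cases hlt : (j : ℕ) < (p : ℕ)
      · rw [if_pos hlt, if_pos hlt]
      · rw [if_neg hlt, if_neg hjp, if_neg hlt]

lemma foldK_noncomm (Kop : Fin (n' + 1) → Module.End K V)
    (hj : (j : ℕ) ≠ 0) (hjp : (j : ℕ) ≠ (p : ℕ)) :
    foldCombK Kop p j = Kop (emb p j) := by
  unfold foldCombK emb
  by_cases h0 : (p : ℕ) = 0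
  · rw [if_pos h0, if_neg hj, if_neg (by omega)]
  · rw [if_neg h0]
    by_cases hn : (p : ℕ) = n'
    · rw [if_pos hn, if_neg hj, if_pos (by have := j.isLt; omega)]
    · rw [if_neg hn]
      by_cases hlt : (j : ℕ) < (p : ℕ)
      · rw [if_pos hlt, if_pos hlt]
      · rw [if_neg hlt, if_neg hjp, if_neg hlt]

lemma foldE_comm (Eop : Fin (n' + 1) → Module.End K V)
    (hj : (j : ℕ) ≠ 0) (hjp : (j : ℕ) = (p : ℕ)) :
    foldCombE ε Eop p j =
      Eop j.castSucc * Eop j.succ - Dc ε j.castSucc j.succ • (Eop j.succ * Eop j.castSucc) := by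
  have hlt := j.isLt
  unfold foldCombE
  rw [if_neg (by omega), if_neg (by omega), if_neg (by omega), if_pos hjp]

lemma foldF_comm (Fop : Fin (n' + 1) → Module.End K V)
    (hj : (j : ℕ) ≠ 0) (hjp : (j : ℕ) = (p : ℕ)) :
    foldCombF ε Fop p j =
      Fop j.succ * Fop j.castSucc -
        (Dc ε j.castSucc j.succ)⁻¹ • (Fop j.castSucc * Fop j.succ) := by
  have hlt := j.isLt
  unfold foldCombF
  rw [if_neg (by omega), if_neg (by omega), if_neg (by omega), if_pos hjp]

lemma foldK_comm (Kop : Fin (n' + 1) → Module.End K V)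
    (hj : (j : ℕ) ≠ 0) (hjp : (j : ℕ) = (p : ℕ)) :
    foldCombK Kop p j = Kop j.castSucc * Kop j.succ := by
  have hlt := j.isLt
  unfold foldCombK
  rw [if_neg (by omega), if_neg (by omega), if_neg (by omega), if_pos hjp]

end Fold

section CommFacts

variable {p : Fin (n' + 1)} {j : Fin n'}

lemma jv_pos (hj : j ≠ 0) : 1 ≤ (j : ℕ) := Nat.one_le_iff_ne_zero.mpr (val_ne_zero j hj)

variable (hj : j ≠ 0) (hjp : (j : ℕ) = (p : ℕ))
include hj hjp

lemma castSucc_eq : j.castSucc = p := Fin.ext (by simpa using hjp)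

lemma succ_sub_one : j.succ - 1 = p := by
  apply Fin.ext
  rw [sub_one_val (by have := n'pos (n' := n'); omega) j.succ (by
    intro h; have := congrArg Fin.val h; simp at this)]
  simp [hjp]

lemma emb_comm_j : emb p j = j.succ := by
  unfold emb; rw [if_neg (by omega)]

lemma emb_comm_jm : emb p (j - 1) = p - 1 := by
  have hjv := jv_pos hj
  have h2n : 2 ≤ n' := by have := j.isLt; omega
  have hv : ((j - 1 : Fin n') : ℕ) = (j : ℕ) - 1 := sub_one_val h2n j hj
  have hp0 : p ≠ 0 := by
    intro h; rw [h] at hjp; simp at hjp; omega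
  apply Fin.ext
  rw [emb_val, hv, if_pos (by omega), sub_one_val (by omega) p hp0]
  omega

lemma succ_ne_p : j.succ ≠ p := by
  intro h; have := congrArg Fin.val h; simp at this; omega

lemma succ_ne_psub : j.succ ≠ p - 1 := by
  have hjv := jv_pos hj
  have hp0 : p ≠ 0 := by
    intro h; rw [h] at hjp; simp at hjp; omega
  intro h; have := congrArg Fin.val h
  rw [sub_one_val (by have := n'pos (n' := n'); omega) p hp0] at this
  simp at this; omega

end CommFacts

lemma emb_sub_one {p : Fin (n' + 1)} {j : Fin n'} (hj : j ≠ 0) (hjp : (j : ℕ) ≠ (p : ℕ)) :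
    emb p j - 1 = emb p (j - 1) := by
  have hjv : 1 ≤ (j : ℕ) := jv_pos hj
  have h2n : 2 ≤ n' := by have := j.isLt; omega
  have hv : ((j - 1 : Fin n') : ℕ) = (j : ℕ) - 1 := sub_one_val h2n j hj
  have hne0 : emb p j ≠ 0 := by
    intro h; have := congrArg Fin.val h
    rw [emb_val] at this; simp at this
    split at this <;> omega
  apply Fin.ext
  rw [sub_one_val (by omega) _ hne0, emb_val, emb_val, hv]
  by_cases hlt : (j : ℕ) < (p : ℕ)
  · rw [if_pos hlt, if_pos (by omega)]
  · rw [if_neg hlt, if_neg (by omega)]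
    omega

end Ops

section Master

variable {n' : ℕ} [NeZero n'] (ε : Fin (n' + 1) → Bool) (p : Fin (n' + 1)) (j : Fin n')

/-- folded weight for `K_j`. -/
def WK : Fin (n' + 1) → K := fun r =>
  if (j : ℕ) = (p : ℕ) then kEntry ε j.castSucc r * kEntry ε j.succ r
  else kEntry ε (emb p j) r

/-- folded weight for `K_j⁻¹`. -/
def WKi : Fin (n' + 1) → K := fun r =>
  if (j : ℕ) = (p : ℕ) then kinvEntry ε j.castSucc r * kinvEntry ε j.succ r
  else kinvEntry ε (emb p j) r

lemma WK_comm (hj : j ≠ 0) (hjp : (j : ℕ) = (p : ℕ)) :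
    WK ε p j = fun r => kEntry ε p r * kEntry ε j.succ r := by
  funext r; rw [WK, if_pos hjp, castSucc_eq hj hjp]

lemma WK_noncomm (hjp : (j : ℕ) ≠ (p : ℕ)) : WK ε p j = kEntry ε (emb p j) := by
  funext r; rw [WK, if_neg hjp]

lemma WKi_comm (hj : j ≠ 0) (hjp : (j : ℕ) = (p : ℕ)) :
    WKi ε p j = fun r => kinvEntry ε p r * kinvEntry ε j.succ r := by
  funext r; rw [WKi, if_pos hjp, castSucc_eq hj hjp]

lemma WKi_noncomm (hjp : (j : ℕ) ≠ (p : ℕ)) : WKi ε p j = kinvEntry ε (emb p j) := by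
  funext r; rw [WKi, if_neg hjp]

variable {ε' : Fin n' → Bool}

lemma qv_emb (hε' : ∀ x, ε' x = ε (emb p x)) (x : Fin n') :
    qv ε (emb p x) = qv ε' x := by
  unfold qv; rw [hε']

lemma WK_emb (hj : j ≠ 0) (hε' : ∀ x, ε' x = ε (emb p x)) (x : Fin n') :
    WK ε p j (emb p x) = kEntry ε' j x := by
  by_cases hjp : (j : ℕ) = (p : ℕ)
  · rw [WK_comm ε p j hj hjp]
    beta_reduce
    unfold kEntry
    rw [succ_sub_one hj hjp]
    rw [show p - 1 = emb p (j - 1) from (emb_comm_jm hj hjp).symm]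
    rw [show j.succ = emb p j from (emb_comm_j hj hjp).symm]
    rw [if_neg (emb_ne p x), if_neg (emb_ne p x)]
    simp only [emb_inj]
    rw [qv_emb ε p hε', qv_emb ε p hε', one_mul, mul_one]
  · rw [WK_noncomm ε p j hjp]
    unfold kEntry
    rw [emb_sub_one hj hjp]
    simp only [emb_inj]
    rw [qv_emb ε p hε', qv_emb ε p hε']

lemma WKi_emb (hj : j ≠ 0) (hε' : ∀ x, ε' x = ε (emb p x)) (x : Fin n') :
    WKi ε p j (emb p x) = kinvEntry ε' j x := by
  by_cases hjp : (j : ℕ) = (p : ℕ)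
  · rw [WKi_comm ε p j hj hjp]
    beta_reduce
    unfold kinvEntry
    rw [succ_sub_one hj hjp]
    rw [show p - 1 = emb p (j - 1) from (emb_comm_jm hj hjp).symm]
    rw [show j.succ = emb p j from (emb_comm_j hj hjp).symm]
    rw [if_neg (emb_ne p x), if_neg (emb_ne p x)]
    simp only [emb_inj]
    rw [qv_emb ε p hε', qv_emb ε p hε', one_mul, mul_one]
  · rw [WKi_noncomm ε p j hjp]
    unfold kinvEntry
    rw [emb_sub_one hj hjp]
    simp only [emb_inj]
    rw [qv_emb ε p hε', qv_emb ε p hε']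

/-- truncated coefficient functions. -/
def Trunc {n ℓ : ℕ} (p : Fin n) (g : Vl n ℓ) : Prop :=
  ∀ μ, (∃ t, μ t = p) → g μ = 0

lemma eOpL_p_zero (ℓ : ℕ) (g : Vl (n' + 1) ℓ) (hg : Trunc p g) (ν : Fin ℓ → Fin (n' + 1)) :
    eOpL (n' + 1) ℓ ε p g ν = 0 := by
  rw [eOpL_apply]
  apply Finset.sum_eq_zero
  intro t _
  rw [hg _ ⟨t, Function.update_self t p ν⟩, mul_zero]

lemma fOpL_p_zero (ℓ : ℕ) (i : Fin (n' + 1)) (hi : i - 1 = p) (g : Vl (n' + 1) ℓ)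
    (hg : Trunc p g) (ν : Fin ℓ → Fin (n' + 1)) :
    fOpL (n' + 1) ℓ ε i g ν = 0 := by
  rw [fOpL_apply]
  apply Finset.sum_eq_zero
  intro t _
  rw [hi, hg _ ⟨t, Function.update_self t p ν⟩, mul_zero]

lemma eE_collapse (ℓ : ℕ) (b : Fin (n' + 1)) (hb : b - 1 = p) (g : Vl (n' + 1) ℓ)
    (hg : Trunc p g) (μ : Fin ℓ → Fin (n' + 1)) :
    eOpL (n' + 1) ℓ ε p (eOpL (n' + 1) ℓ ε b g) μ =
      ∑ t : Fin ℓ, (if μ t = p - 1 then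
          ∏ s ∈ Finset.univ.filter (fun s => s < t),
            kinvEntry ε p (μ s) * kinvEntry ε b (μ s) else 0) *
        g (Function.update μ t b) := by
  rw [eOpL_apply]
  refine Finset.sum_congr rfl fun t _ => ?_
  by_cases hc : μ t = p - 1
  · rw [if_pos hc, if_pos hc, eOpL_apply]
    have hsum : (∑ u : Fin ℓ, (if Function.update μ t p u = b - 1 then
          ∏ s ∈ Finset.univ.filter (fun s => s < u),
            kinvEntry ε b (Function.update μ t p s) else 0) *
          g (Function.update (Function.update μ t p) u b)) =
        (∏ s ∈ Finset.univ.filter (fun s => s < t), kinvEntry ε b (μ s)) *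
          g (Function.update μ t b) := by
      rw [Finset.sum_eq_single t (fun u _ hu => ?_) (fun h => absurd (Finset.mem_univ t) h)]
      · rw [Function.update_self, if_pos hb.symm, Function.update_idem]
        congr 1
        refine Finset.prod_congr rfl fun s hs => ?_
        have hst : s ≠ t := ne_of_lt (Finset.mem_filter.mp hs).2
        rw [Function.update_of_ne hst]
      · rw [hg _ ⟨t, ?_⟩, mul_zero]
        rw [Function.update_of_ne (Ne.symm hu), Function.update_self]
    rw [hsum, Finset.prod_mul_distrib]
    ring
  · rw [if_neg hc, if_neg hc, zero_mul, zero_mul]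

end Master

section Master2

variable {n' : ℕ} [NeZero n'] (ε : Fin (n' + 1) → Bool) (p : Fin (n' + 1)) (j : Fin n')

lemma WK_comm' (hj : j ≠ 0) (hjp : (j : ℕ) = (p : ℕ)) (r : Fin (n' + 1)) :
    WK ε p j r = kEntry ε p r * kEntry ε j.succ r := by rw [WK_comm ε p j hj hjp]

lemma WK_nc' (hjp : (j : ℕ) ≠ (p : ℕ)) (r : Fin (n' + 1)) :
    WK ε p j r = kEntry ε (emb p j) r := by rw [WK_noncomm ε p j hjp]

lemma WKi_comm' (hj : j ≠ 0) (hjp : (j : ℕ) = (p : ℕ)) (r : Fin (n' + 1)) :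
    WKi ε p j r = kinvEntry ε p r * kinvEntry ε j.succ r := by rw [WKi_comm ε p j hj hjp]

lemma WKi_nc' (hjp : (j : ℕ) ≠ (p : ℕ)) (r : Fin (n' + 1)) :
    WKi ε p j r = kinvEntry ε (emb p j) r := by rw [WKi_noncomm ε p j hjp]

lemma fF_collapse (ℓ : ℕ) (b : Fin (n' + 1)) (hb : b - 1 = p) (g : Vl (n' + 1) ℓ)
    (hg : Trunc p g) (μ : Fin ℓ → Fin (n' + 1)) :
    fOpL (n' + 1) ℓ ε b (fOpL (n' + 1) ℓ ε p g) μ =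
      ∑ t : Fin ℓ, (if μ t = b then
          ∏ s ∈ Finset.univ.filter (fun s => t < s),
            kEntry ε p (μ s) * kEntry ε b (μ s) else 0) *
        g (Function.update μ t (p - 1)) := by
  rw [fOpL_apply]
  refine Finset.sum_congr rfl fun t _ => ?_
  by_cases hc : μ t = b
  · rw [if_pos hc, if_pos hc, hb, fOpL_apply]
    have hsum : (∑ u : Fin ℓ, (if Function.update μ t p u = p then
          ∏ s ∈ Finset.univ.filter (fun s => u < s),
            kEntry ε p (Function.update μ t p s) else 0) *
          g (Function.update (Function.update μ t p) u (p - 1))) =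
        (∏ s ∈ Finset.univ.filter (fun s => t < s), kEntry ε p (μ s)) *
          g (Function.update μ t (p - 1)) := by
      rw [Finset.sum_eq_single t (fun u _ hu => ?_) (fun h => absurd (Finset.mem_univ t) h)]
      · rw [Function.update_self, if_pos rfl, Function.update_idem]
        congr 1
        refine Finset.prod_congr rfl fun s hs => ?_
        have hst : s ≠ t := ne_of_gt (Finset.mem_filter.mp hs).2
        rw [Function.update_of_ne hst]
      · rw [hg _ ⟨t, ?_⟩, mul_zero]
        rw [Function.update_of_ne (Ne.symm hu), Function.update_self]
    rw [hsum, Finset.prod_mul_distrib]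
    ring
  · rw [if_neg hc, if_neg hc, zero_mul, zero_mul]

lemma master_E (ℓ : ℕ) (hj : j ≠ 0) (g : Vl (n' + 1) ℓ) (hg : Trunc p g)
    (μ : Fin ℓ → Fin (n' + 1)) :
    foldCombE ε (eOpL (n' + 1) ℓ ε) p j g μ =
      ∑ t : Fin ℓ, (if μ t = emb p (j - 1) then
          ∏ s ∈ Finset.univ.filter (fun s => s < t), WKi ε p j (μ s) else 0) *
        g (Function.update μ t (emb p j)) := by
  have hj' : (j : ℕ) ≠ 0 := val_ne_zero j hj
  by_cases hjp : (j : ℕ) = (p : ℕ)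
  · rw [foldE_comm ε p j _ hj' hjp, castSucc_eq hj hjp]
    simp only [LinearMap.sub_apply, LinearMap.smul_apply, Module.End.mul_apply, Pi.sub_apply,
      Pi.smul_apply, smul_eq_mul]
    have hz : eOpL (n' + 1) ℓ ε p g = 0 := funext fun ν => eOpL_p_zero ε p ℓ g hg ν
    rw [hz, map_zero]
    simp only [Pi.zero_apply, mul_zero, sub_zero]
    rw [eE_collapse ε p ℓ j.succ (succ_sub_one hj hjp) g hg μ]
    simp only [WKi_comm' ε p j hj hjp]
    rw [emb_comm_jm hj hjp, emb_comm_j hj hjp]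
  · rw [foldE_noncomm ε p j _ hj' hjp, eOpL_apply]
    simp only [WKi_nc' ε p j hjp]
    rw [emb_sub_one hj hjp]

lemma master_F (ℓ : ℕ) (hj : j ≠ 0) (g : Vl (n' + 1) ℓ) (hg : Trunc p g)
    (μ : Fin ℓ → Fin (n' + 1)) :
    foldCombF ε (fOpL (n' + 1) ℓ ε) p j g μ =
      ∑ t : Fin ℓ, (if μ t = emb p j then
          ∏ s ∈ Finset.univ.filter (fun s => t < s), WK ε p j (μ s) else 0) *
        g (Function.update μ t (emb p (j - 1))) := by
  have hj' : (j : ℕ) ≠ 0 := val_ne_zero j hj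
  by_cases hjp : (j : ℕ) = (p : ℕ)
  · rw [foldF_comm ε p j _ hj' hjp, castSucc_eq hj hjp]
    simp only [LinearMap.sub_apply, LinearMap.smul_apply, Module.End.mul_apply, Pi.sub_apply,
      Pi.smul_apply, smul_eq_mul]
    have hz : fOpL (n' + 1) ℓ ε j.succ g = 0 :=
      funext fun ν => fOpL_p_zero ε p ℓ j.succ (succ_sub_one hj hjp) g hg ν
    rw [hz, map_zero]
    simp only [Pi.zero_apply, mul_zero, sub_zero]
    rw [fF_collapse ε p ℓ j.succ (succ_sub_one hj hjp) g hg μ]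
    simp only [WK_comm' ε p j hj hjp]
    rw [emb_comm_jm hj hjp, emb_comm_j hj hjp]
  · rw [foldF_noncomm ε p j _ hj' hjp, fOpL_apply]
    simp only [WK_nc' ε p j hjp]
    rw [emb_sub_one hj hjp]

lemma master_K (ℓ : ℕ) (hj : j ≠ 0) (g : Vl (n' + 1) ℓ) (μ : Fin ℓ → Fin (n' + 1)) :
    foldCombK (kOpL (n' + 1) ℓ ε) p j g μ = (∏ t : Fin ℓ, WK ε p j (μ t)) * g μ := by
  have hj' : (j : ℕ) ≠ 0 := val_ne_zero j hj
  by_cases hjp : (j : ℕ) = (p : ℕ)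
  · rw [foldK_comm p j _ hj' hjp, castSucc_eq hj hjp, Module.End.mul_apply, kOpL_apply,
      kOpL_apply]
    simp only [WK_comm' ε p j hj hjp]
    rw [Finset.prod_mul_distrib]
    ring
  · rw [foldK_noncomm p j _ hj' hjp, kOpL_apply]
    simp only [WK_nc' ε p j hjp]

lemma master_E1 (hj : j ≠ 0) (g : Fin (n' + 1) → K) (r : Fin (n' + 1)) :
    foldCombE ε (eNat (n' + 1)) p j g r =
      (if r = emb p (j - 1) then (1:K) else 0) * g (emb p j) := by
  have hj' : (j : ℕ) ≠ 0 := val_ne_zero j hj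
  by_cases hjp : (j : ℕ) = (p : ℕ)
  · rw [foldE_comm ε p j _ hj' hjp, castSucc_eq hj hjp]
    simp only [LinearMap.sub_apply, LinearMap.smul_apply, Module.End.mul_apply, Pi.sub_apply,
      Pi.smul_apply, smul_eq_mul, eNat_apply]
    rw [if_pos (succ_sub_one hj hjp).symm, if_neg (succ_ne_psub hj hjp),
      emb_comm_jm hj hjp, emb_comm_j hj hjp]
    ring
  · rw [foldE_noncomm ε p j _ hj' hjp, eNat_apply, emb_sub_one hj hjp]

lemma master_F1 (hj : j ≠ 0) (g : Fin (n' + 1) → K) (r : Fin (n' + 1)) :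
    foldCombF ε (fNat (n' + 1)) p j g r =
      (if r = emb p j then (1:K) else 0) * g (emb p (j - 1)) := by
  have hj' : (j : ℕ) ≠ 0 := val_ne_zero j hj
  by_cases hjp : (j : ℕ) = (p : ℕ)
  · rw [foldF_comm ε p j _ hj' hjp, castSucc_eq hj hjp]
    simp only [LinearMap.sub_apply, LinearMap.smul_apply, Module.End.mul_apply, Pi.sub_apply,
      Pi.smul_apply, smul_eq_mul, fNat_apply]
    rw [succ_sub_one hj hjp, if_pos rfl, if_neg (Ne.symm (succ_ne_psub hj hjp)),
      emb_comm_jm hj hjp, emb_comm_j hj hjp]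
    ring
  · rw [foldF_noncomm ε p j _ hj' hjp, fNat_apply, emb_sub_one hj hjp]

lemma master_K1 (hj : j ≠ 0) (g : Fin (n' + 1) → K) (r : Fin (n' + 1)) :
    foldCombK (kNat (n' + 1) ε) p j g r = WK ε p j r * g r := by
  have hj' : (j : ℕ) ≠ 0 := val_ne_zero j hj
  by_cases hjp : (j : ℕ) = (p : ℕ)
  · rw [foldK_comm p j _ hj' hjp, castSucc_eq hj hjp, Module.End.mul_apply, kNat_apply,
      kNat_apply, WK_comm' ε p j hj hjp]
    ring
  · rw [foldK_noncomm p j _ hj' hjp, kNat_apply, WK_nc' ε p j hjp]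

lemma master_K1i (hj : j ≠ 0) (g : Fin (n' + 1) → K) (r : Fin (n' + 1)) :
    foldCombK (kinvNat (n' + 1) ε) p j g r = WKi ε p j r * g r := by
  have hj' : (j : ℕ) ≠ 0 := val_ne_zero j hj
  by_cases hjp : (j : ℕ) = (p : ℕ)
  · rw [foldK_comm p j _ hj' hjp, castSucc_eq hj hjp, Module.End.mul_apply, kinvNat_apply,
      kinvNat_apply, WKi_comm' ε p j hj hjp]
    ring
  · rw [foldK_noncomm p j _ hj' hjp, kinvNat_apply, WKi_nc' ε p j hjp]

end Master2

section Generic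

lemma eOpL_apply' {n : ℕ} [NeZero n] (ε : Fin n → Bool) (ℓ : ℕ) (i : Fin n) (g : Vl n ℓ)
    (μ : Fin ℓ → Fin n) :
    eOpL n ℓ ε i g μ =
      ∑ t : Fin ℓ, (if μ t = i - 1 then
          ∏ s ∈ Finset.univ.filter (fun s => s < t), kinvEntry ε i (μ s) else 0) *
        g (Function.update μ t i) := by
  simp only [eOpL, LinearMap.sum_apply, Finset.sum_apply, twoTerm_apply, Pi.zero_apply,
    zero_mul, zero_add]

lemma fOpL_apply' {n : ℕ} [NeZero n] (ε : Fin n → Bool) (ℓ : ℕ) (i : Fin n) (g : Vl n ℓ)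
    (μ : Fin ℓ → Fin n) :
    fOpL n ℓ ε i g μ =
      ∑ t : Fin ℓ, (if μ t = i then
          ∏ s ∈ Finset.univ.filter (fun s => t < s), kEntry ε i (μ s) else 0) *
        g (Function.update μ t (i - 1)) := by
  simp only [fOpL, LinearMap.sum_apply, Finset.sum_apply, twoTerm_apply, Pi.zero_apply,
    zero_mul, zero_add]

lemma sub_one_ne' {n : ℕ} [NeZero n] (h2 : 2 ≤ n) (i : Fin n) : i - 1 ≠ i := by
  intro h
  rw [sub_eq_self] at h
  have := one_val (m := n) h2
  rw [h] at this
  simp at this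

lemma qhEntry_κe' {n : ℕ} [NeZero n] (h2 : 2 ≤ n) (ε : Fin n → Bool) (i r : Fin n) :
    qhEntry ε (κe ε i) r = kEntry ε i r := by
  have hne : i - 1 ≠ i := sub_one_ne' h2 i
  simp only [qhEntry, κe, ωexp, kEntry, Pi.sub_apply]
  by_cases h1 : r = i - 1
  · subst h1
    rw [if_pos rfl, if_pos rfl, if_neg hne, if_neg hne, sub_zero]
    unfold sgn
    split <;> norm_num
  · by_cases h2' : r = i
    · subst h2'
      rw [if_neg h1, if_pos rfl, if_neg h1, if_pos rfl, zero_sub, mul_neg]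
      have : sgn ε r * sgn ε r = 1 := by unfold sgn; split <;> norm_num
      rw [this, zpow_neg, zpow_one, one_mul]
    · rw [if_neg h1, if_neg h2', if_neg h1, if_neg h2', sub_zero, mul_zero, zpow_zero, one_mul]

lemma kOpL_apply' {n : ℕ} [NeZero n] (h2 : 2 ≤ n) (ε : Fin n → Bool) (ℓ : ℕ) (i : Fin n)
    (g : Vl n ℓ) (μ : Fin ℓ → Fin n) :
    kOpL n ℓ ε i g μ = (∏ t : Fin ℓ, kEntry ε i (μ t)) * g μ := by
  rw [kOpL]
  show (∏ t : Fin ℓ, qhEntry ε (κe ε i) (μ t)) * g μ + 0 * g μ = _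
  rw [zero_mul, add_zero]
  congr 1
  exact Finset.prod_congr rfl fun t _ => qhEntry_κe' h2 ε i (μ t)

lemma eNat_apply' {n : ℕ} [NeZero n] (i r : Fin n) (g : Fin n → K) :
    eNat n i g r = (if r = i - 1 then (1:K) else 0) * g i := by
  show _ + (0:K) * g r = _
  rw [zero_mul, add_zero]

lemma fNat_apply' {n : ℕ} [NeZero n] (i r : Fin n) (g : Fin n → K) :
    fNat n i g r = (if r = i then (1:K) else 0) * g (i - 1) := by
  show _ + (0:K) * g r = _
  rw [zero_mul, add_zero]

lemma kNat_apply' {n : ℕ} [NeZero n] (ε : Fin n → Bool) (i r : Fin n) (g : Fin n → K) :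
    kNat n ε i g r = kEntry ε i r * g r := by
  show kEntry ε i r * g r + 0 * g r = _
  rw [zero_mul, add_zero]

lemma slotOp_apply {n r : ℕ} (A : Module.End K (Fin n → K)) (t : Fin r) (g : Vl n r)
    (μ : Fin r → Fin n) :
    slotOp A t g μ = A (fun c => g (Function.update μ t c)) (μ t) := rfl

lemma emb_update {n' ℓ : ℕ} (p : Fin (n' + 1)) (μ' : Fin ℓ → Fin n') (t : Fin ℓ) (b : Fin n') :
    Function.update (fun s => emb p (μ' s)) t (emb p b) =
      fun s => emb p (Function.update μ' t b s) := by
  funext s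
  by_cases hst : s = t
  · subst hst
    rw [Function.update_self, Function.update_self]
  · rw [Function.update_of_ne hst, Function.update_of_ne hst]

lemma if_weight (c : Prop) [Decidable c] (w : K) :
    (if c then w else 0) = w * (if c then (1:K) else 0) := by
  split <;> simp

lemma upd01 {α : Type*} (μ : Fin 2 → α) (v : α) : Function.update μ 0 v 1 = μ 1 :=
  Function.update_of_ne (by decide) v μ

lemma upd_self01 {α : Type*} (μ : Fin 2 → α) (v : α) :
    Function.update (Function.update μ 0 v) 1 (μ 1) = Function.update μ 0 v := by
  conv_lhs => rw [← upd01 μ v]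
  exact Function.update_eq_self _ _

lemma filter_lt_zero : Finset.univ.filter (fun s : Fin 2 => s < 0) = ∅ := by decide
lemma filter_lt_one : Finset.univ.filter (fun s : Fin 2 => s < 1) = {0} := by decide
lemma filter_gt_zero : Finset.univ.filter (fun s : Fin 2 => 0 < s) = {1} := by decide
lemma filter_gt_one : Finset.univ.filter (fun s : Fin 2 => 1 < s) = ∅ := by decide

/-- the truncation isomorphism on the natural module. -/
def θmap {n' : ℕ} (p : Fin (n' + 1)) : (Fin (n' + 1) → K) →ₗ[K] (Fin n' → K) where
  toFun g := fun x => g (emb p x)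
  map_add' g h := rfl
  map_smul' a g := rfl

lemma θmap_apply {n' : ℕ} (p : Fin (n' + 1)) (g : Fin (n' + 1) → K) (x : Fin n') :
    θmap p g x = g (emb p x) := rfl

/-- the truncation isomorphism on tensor powers. -/
def Θmap {n' : ℕ} (p : Fin (n' + 1)) (ℓ : ℕ) : Vl (n' + 1) ℓ →ₗ[K] Vl n' ℓ where
  toFun g := fun μ => g (fun t => emb p (μ t))
  map_add' g h := rfl
  map_smul' a g := rfl

lemma Θmap_apply {n' : ℕ} (p : Fin (n' + 1)) (ℓ : ℕ) (g : Vl (n' + 1) ℓ)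
    (μ : Fin ℓ → Fin n') :
    Θmap p ℓ g μ = g (fun t => emb p (μ t)) := rfl

end Generic

end KY44

open KY44 in
/-- **Lemma 4.4 (Kwon–Yu)**: let `ε'` be obtained from `ε` by deleting the entry at position
`p`.  (1) The truncation `𝒱' = tr^ε_{ε'}(𝒱) = {g | g p = 0}` is stable under the
`Ů(ε')`-action via the folding homomorphism `φ` (i.e. under the operators `E_j, F_j, K_j`
for `j ≠ 0`) and is isomorphic to the natural representation of `Ů(ε')`.
(2) `tr^ε_{ε'}(𝒱^{⊗ℓ})` is isomorphic to `𝒱'^{⊗ℓ}` as a `Ů(ε')`-module; in particular the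
actions of `E_j, F_j, K_j` (`j ≠ 0`) on `𝒱' ⊗ 𝒱'` equal those of `E_j ⊗ 1 + K_j⁻¹ ⊗ E_j`,
`1 ⊗ F_j + F_j ⊗ K_j` and `K_j ⊗ K_j` respectively. -/
theorem truncation_of_natural_module (n' : ℕ) [NeZero n'] (hn : 4 ≤ n' + 1)
    (ε : Fin (n' + 1) → Bool) (p : Fin (n' + 1)) (ε' : Fin n' → Bool)
    (hε' : ∀ j : Fin n', ε' j = ε (if (j : ℕ) < (p : ℕ) then j.castSucc else j.succ))
    (hhom : n' + 1 = 4 → ∀ j j' : Fin n', ε' j = ε' j') (ℓ : ℕ) :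
    -- (1) stability of `𝒱'`
    (∀ j : Fin n', j ≠ 0 → ∀ g : Fin (n' + 1) → K, g p = 0 →
      foldCombE ε (eNat (n' + 1)) p j g p = 0 ∧
      foldCombF ε (fNat (n' + 1)) p j g p = 0 ∧
      foldCombK (kNat (n' + 1) ε) p j g p = 0) ∧
    -- (1) `𝒱' ≅` the natural representation of `Ů(ε')`
    (∃ θ : (Fin (n' + 1) → K) →ₗ[K] (Fin n' → K),
      (∀ g, g p = 0 → θ g = 0 → g = 0) ∧
      (∀ g' : Fin n' → K, ∃ g, g p = 0 ∧ θ g = g') ∧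
      (∀ j : Fin n', j ≠ 0 → ∀ g, g p = 0 →
        θ (foldCombE ε (eNat (n' + 1)) p j g) = eNat n' j (θ g) ∧
        θ (foldCombF ε (fNat (n' + 1)) p j g) = fNat n' j (θ g) ∧
        θ (foldCombK (kNat (n' + 1) ε) p j g) = kNat n' ε' j (θ g))) ∧
    -- (2) stability of `tr^ε_{ε'}(𝒱^{⊗ℓ})`
    (∀ j : Fin n', j ≠ 0 → ∀ g : Vl (n' + 1) ℓ, (∀ μ, (∃ t, μ t = p) → g μ = 0) →
      (∀ μ, (∃ t, μ t = p) → foldCombE ε (eOpL (n' + 1) ℓ ε) p j g μ = 0) ∧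
      (∀ μ, (∃ t, μ t = p) → foldCombF ε (fOpL (n' + 1) ℓ ε) p j g μ = 0) ∧
      (∀ μ, (∃ t, μ t = p) → foldCombK (kOpL (n' + 1) ℓ ε) p j g μ = 0)) ∧
    -- (2) `tr^ε_{ε'}(𝒱^{⊗ℓ}) ≅ 𝒱'^{⊗ℓ}` as `Ů(ε')`-modules
    (∃ Θ : Vl (n' + 1) ℓ →ₗ[K] Vl n' ℓ,
      (∀ g, (∀ μ, (∃ t, μ t = p) → g μ = 0) → Θ g = 0 → g = 0) ∧
      (∀ g' : Vl n' ℓ, ∃ g, (∀ μ, (∃ t, μ t = p) → g μ = 0) ∧ Θ g = g') ∧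
      (∀ j : Fin n', j ≠ 0 → ∀ g, (∀ μ, (∃ t, μ t = p) → g μ = 0) →
        Θ (foldCombE ε (eOpL (n' + 1) ℓ ε) p j g) = eOpL n' ℓ ε' j (Θ g) ∧
        Θ (foldCombF ε (fOpL (n' + 1) ℓ ε) p j g) = fOpL n' ℓ ε' j (Θ g) ∧
        Θ (foldCombK (kOpL (n' + 1) ℓ ε) p j g) = kOpL n' ℓ ε' j (Θ g))) ∧
    -- in particular, the comultiplication formulas on `𝒱' ⊗ 𝒱'`
    (∀ j : Fin n', j ≠ 0 → ∀ g : Vl (n' + 1) 2, (∀ μ, (∃ t, μ t = p) → g μ = 0) →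
      foldCombE ε (eOpL (n' + 1) 2 ε) p j g =
        (slotOp (foldCombE ε (eNat (n' + 1)) p j) (0 : Fin 2) +
          slotOp (foldCombK (kinvNat (n' + 1) ε) p j) (0 : Fin 2) *
            slotOp (foldCombE ε (eNat (n' + 1)) p j) (1 : Fin 2)) g ∧
      foldCombF ε (fOpL (n' + 1) 2 ε) p j g =
        (slotOp (foldCombF ε (fNat (n' + 1)) p j) (1 : Fin 2) +
          slotOp (foldCombF ε (fNat (n' + 1)) p j) (0 : Fin 2) *
            slotOp (foldCombK (kNat (n' + 1) ε) p j) (1 : Fin 2)) g ∧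
      foldCombK (kOpL (n' + 1) 2 ε) p j g =
        (slotOp (foldCombK (kNat (n' + 1) ε) p j) (0 : Fin 2) *
          slotOp (foldCombK (kNat (n' + 1) ε) p j) (1 : Fin 2)) g) := by
  have h3 : 3 ≤ n' := by omega
  have hε'' : ∀ x : Fin n', ε' x = ε (emb p x) := hε'
  clear hhom hε'
  refine ⟨?_, ?_, ?_, ?_, ?_⟩
  · -- (1) stability
    intro j hj g hgp
    refine ⟨?_, ?_, ?_⟩
    · rw [master_E1 ε p j hj g p, if_neg (fun h => emb_ne p (j - 1) h.symm), zero_mul]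
    · rw [master_F1 ε p j hj g p, if_neg (fun h => emb_ne p j h.symm), zero_mul]
    · rw [master_K1 ε p j hj g p, hgp, mul_zero]
  · -- (1) isomorphism
    refine ⟨θmap p, ?_, ?_, ?_⟩
    · intro g hgp hθ
      funext r
      by_cases hr : r = p
      · rw [hr]; exact hgp
      · obtain ⟨x, hx⟩ := emb_surj p r hr
        have h1 := congrFun hθ x
        rw [θmap_apply] at h1
        rw [← hx]
        simpa using h1
    · intro g'
      refine ⟨fun r => if h : ∃ x, emb p x = r then g' h.choose else 0, ?_, ?_⟩
      · beta_reduce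
        rw [dif_neg]
        rintro ⟨x, hx⟩
        exact emb_ne p x hx
      · funext x
        simp only [θmap_apply]
        have h : ∃ y, emb p y = emb p x := ⟨x, rfl⟩
        rw [dif_pos h]
        exact congrArg g' (emb_inj.mp h.choose_spec)
    · intro j hj g hgp
      refine ⟨?_, ?_, ?_⟩ <;> funext x
      · simp only [θmap_apply]
        rw [master_E1 ε p j hj g (emb p x), eNat_apply']
        simp only [emb_inj]
        rfl
      · simp only [θmap_apply]
        rw [master_F1 ε p j hj g (emb p x), fNat_apply']
        simp only [emb_inj]
        rfl
      · simp only [θmap_apply]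
        rw [master_K1 ε p j hj g (emb p x), kNat_apply', WK_emb ε p j hj hε'' x]
        rfl
  · -- (2) stability
    intro j hj g hg
    have hg' : Trunc p g := hg
    refine ⟨?_, ?_, ?_⟩
    · rintro μ ⟨t0, ht0⟩
      rw [master_E ε p j ℓ hj g hg' μ]
      apply Finset.sum_eq_zero
      intro t _
      by_cases htt : t = t0
      · subst htt
        rw [if_neg (fun h => emb_ne p (j - 1) (h.symm.trans ht0)), zero_mul]
      · refine mul_eq_zero_of_right _ (hg' _ ⟨t0, ?_⟩)
        rw [Function.update_of_ne (Ne.symm htt)]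
        exact ht0
    · rintro μ ⟨t0, ht0⟩
      rw [master_F ε p j ℓ hj g hg' μ]
      apply Finset.sum_eq_zero
      intro t _
      by_cases htt : t = t0
      · subst htt
        rw [if_neg (fun h => emb_ne p j (h.symm.trans ht0)), zero_mul]
      · refine mul_eq_zero_of_right _ (hg' _ ⟨t0, ?_⟩)
        rw [Function.update_of_ne (Ne.symm htt)]
        exact ht0
    · rintro μ ⟨t0, ht0⟩
      rw [master_K ε p j ℓ hj g μ, hg' μ ⟨t0, ht0⟩, mul_zero]
  · -- (2) isomorphism
    refine ⟨Θmap p ℓ, ?_, ?_, ?_⟩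
    · intro g hg hΘ
      funext μ
      by_cases hμ : ∃ t, μ t = p
      · exact hg μ hμ
      · push_neg at hμ
        have hch : ∀ t, ∃ x, emb p x = μ t := fun t => emb_surj p (μ t) (hμ t)
        have hμeq : μ = fun t => emb p ((hch t).choose) :=
          funext fun t => ((hch t).choose_spec).symm
        have h1 := congrFun hΘ (fun t => (hch t).choose)
        rw [Θmap_apply] at h1
        rw [hμeq]
        simpa using h1
    · intro g'
      refine ⟨fun μ => if h : ∀ t, ∃ x, emb p x = μ t then g' (fun t => (h t).choose)
        else 0, ?_, ?_⟩
      · rintro μ ⟨t0, ht0⟩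
        beta_reduce
        rw [dif_neg]
        intro h
        exact emb_ne p (h t0).choose (((h t0).choose_spec).trans ht0)
      · funext μ'
        simp only [Θmap_apply]
        have h : ∀ t, ∃ x, emb p x = emb p (μ' t) := fun t => ⟨μ' t, rfl⟩
        rw [dif_pos h]
        exact congrArg g' (funext fun t => emb_inj.mp (h t).choose_spec)
    · intro j hj g hg
      have hg' : Trunc p g := hg
      refine ⟨?_, ?_, ?_⟩ <;> funext μ'
      · simp only [Θmap_apply]
        rw [master_E ε p j ℓ hj g hg' (fun t => emb p (μ' t)), eOpL_apply']
        refine Finset.sum_congr rfl fun t _ => ?_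
        rw [emb_update p μ' t j]
        simp only [emb_inj, WKi_emb ε p j hj hε'', Θmap_apply]
      · simp only [Θmap_apply]
        rw [master_F ε p j ℓ hj g hg' (fun t => emb p (μ' t)), fOpL_apply']
        refine Finset.sum_congr rfl fun t _ => ?_
        rw [emb_update p μ' t (j - 1)]
        simp only [emb_inj, WK_emb ε p j hj hε'', Θmap_apply]
      · simp only [Θmap_apply]
        rw [master_K ε p j ℓ hj g (fun t => emb p (μ' t)),
          kOpL_apply' (by omega) ε' ℓ j]
        simp only [WK_emb ε p j hj hε'', Θmap_apply]
  · -- (2) comultiplication formulas on two factors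
    intro j hj g hg
    have hg' : Trunc p g := hg
    refine ⟨?_, ?_, ?_⟩
    · funext μ
      simp only [LinearMap.add_apply, Module.End.mul_apply, Pi.add_apply]
      rw [master_E ε p j 2 hj g hg' μ, Fin.sum_univ_two, filter_lt_zero, filter_lt_one,
        Finset.prod_empty, Finset.prod_singleton]
      simp only [slotOp_apply, master_E1 ε p j hj, master_K1i ε p j hj,
        Function.update_eq_self]
      rw [if_weight (μ 1 = emb p (j - 1)) (WKi ε p j (μ 0))]
      ring
    · funext μ
      simp only [LinearMap.add_apply, Module.End.mul_apply, Pi.add_apply]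
      rw [master_F ε p j 2 hj g hg' μ, Fin.sum_univ_two, filter_gt_zero, filter_gt_one,
        Finset.prod_empty, Finset.prod_singleton]
      simp only [slotOp_apply, master_F1 ε p j hj, master_K1 ε p j hj,
        Function.update_eq_self, upd01, upd_self01]
      rw [if_weight (μ 0 = emb p j) (WK ε p j (μ 1))]
      ring
    · funext μ
      simp only [Module.End.mul_apply]
      rw [master_K ε p j 2 hj g μ, Fin.prod_univ_two]
      simp only [slotOp_apply, master_K1 ε p j hj, Function.update_eq_self, upd01]
      ring
end
end

section
/- Let ε′ be obtained from ε by removing ε_i (with ε′ homogeneous if n = 4), and let V, W be Ů(ε)-submodules of tensor powers of the natural module 𝒱. Then: (1) tr^ε_{ε′}(V), tr^ε_{ε′}(W), and tr^ε_{ε′}(V⊗W) are Ů(ε′)-modules via the folding homomorphism φ; (2) tr^ε_{ε′}(V⊗W) ≅ tr^ε_{ε′}(V) ⊗ tr^ε_{ε′}(W) as Ů(ε′)-modules. -/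
/-! Generalized quantum group of affine type A (Kwon–Yu), common definitions.

Conventions:
* The base field is `K = ℚ(q)` with `qq = q`.
* The index set `𝕀 = {1,…,n}` is modeled 0-based by `Fin n`: the position `p : Fin n`
  represents the letter `p+1`; `ε : Fin n → Bool` with `ε p = true` meaning `ε_{p+1} = 1`.
* The affine index set `I = {0,1,…,n-1}` is modeled by `Fin n` (with cyclic arithmetic);
  for `i : Fin n`, the simple root is `α_i = δ_i - δ_{i+1}` (letters mod n), whose
  letters have 0-based positions `i - 1` and `i` (`Fin` subtraction is cyclic).
-/

set_option synthInstance.maxHeartbeats 1000000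
set_option maxHeartbeats 1600000

noncomputable section
open scoped TensorProduct

/-- the truncation condition: coefficient functions vanishing on multi-indices using the
deleted letter position `p` (i.e. weights `μ` with `(μ|δ_p) ≠ 0`). -/
def truncSub (n ℓ : ℕ) (p : Fin n) : Submodule K (Vl n ℓ) where
  carrier := {g | ∀ μ, (∃ t, μ t = p) → g μ = 0}
  add_mem' := by
    intro a b ha hb μ hμ
    simp only [Pi.add_apply, ha μ hμ, hb μ hμ, add_zero]
  zero_mem' := by intro μ hμ; rfl
  smul_mem' := by
    intro c a ha μ hμ
    simp only [Pi.smul_apply, ha μ hμ, smul_zero]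

/-- the product (concatenation) map realizing `𝒱^{⊗ℓ₁} ⊗ 𝒱^{⊗ℓ₂} = 𝒱^{⊗(ℓ₁+ℓ₂)}`. -/
def concatFn {n ℓ₁ ℓ₂ : ℕ} (g : Vl n ℓ₁) (h : Vl n ℓ₂) : Vl n (ℓ₁ + ℓ₂) :=
  fun μ => g (fun t => μ (Fin.castAdd ℓ₂ t)) * h (fun t => μ (Fin.natAdd ℓ₁ t))

/-- the tensor product `V ⊗ W ⊆ 𝒱^{⊗(ℓ₁+ℓ₂)}` of submodules `V ⊆ 𝒱^{⊗ℓ₁}`, `W ⊆ 𝒱^{⊗ℓ₂}`. -/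
def tensSpan {n ℓ₁ ℓ₂ : ℕ} (V : Submodule K (Vl n ℓ₁)) (W : Submodule K (Vl n ℓ₂)) :
    Submodule K (Vl n (ℓ₁ + ℓ₂)) :=
  Submodule.span K {x | ∃ g ∈ V, ∃ h ∈ W, x = concatFn g h}

/-! The truncation `tr^ε_{ε'}` keeps the multi-indices `μ` in which the deleted letter `p` does
not occur. Since `q^{ω_p}` acts on `v_μ` by `q_p^{#p(μ)}` and `q_p` is not a root of unity, the
projection onto the truncation is a polynomial in `q^{ω_p}` (interpolation at
`1, q_p, …, q_p^ℓ`). It therefore maps every `Ů(ε)`-submodule into itself, and it is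
multiplicative on pure tensors; this gives `tr(V ⊗ W) = tr V ⊗ tr W`.

A folded generator `E_j, F_j, K_j` (`j ≠ 0`) is either a single generator `e_i, f_i, k_i` with
`i ∉ {0, p, p + 1}`, which neither creates nor destroys a letter `p`, or the `q`-commutator of the
generators at `p` and `p + 1`. On truncated vectors `e_p` and `f_{p+1}` vanish, so the commutator
reduces to `e_p e_{p+1}` (resp. `f_{p+1} f_p`), which turns a letter `p + 1` into `p - 1`
(resp. `p - 1` into `p + 1`) by way of `p`. This gives the stability of the truncations, and
expanding the coproduct twice gives the tensor product rule for the folded action. -/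

lemma Fin.castAdd_ne_natAdd {m n : ℕ} (a : Fin m) (b : Fin n) :
    Fin.castAdd n a ≠ Fin.natAdd m b := by
  simp [Fin.ext_iff]; omega

lemma Fin.castAdd_lt_castAdd_iff {m n : ℕ} {a b : Fin m} :
    Fin.castAdd n a < Fin.castAdd n b ↔ a < b :=
  Iff.rfl

lemma Fin.castAdd_lt_natAdd {m n : ℕ} (a : Fin m) (b : Fin n) :
    Fin.castAdd n a < Fin.natAdd m b := by
  simp [Fin.lt_def]; omega

lemma Fin.prod_filter_univ_add {M : Type*} [CommMonoid M] {m n : ℕ} (P : Fin (m + n) → Prop)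
    [DecidablePred P] (φ : Fin (m + n) → M) :
    ∏ s ∈ Finset.univ.filter P, φ s =
      (∏ s ∈ Finset.univ.filter (fun s => P (Fin.castAdd n s)), φ (Fin.castAdd n s)) *
        ∏ s ∈ Finset.univ.filter (fun s => P (Fin.natAdd m s)), φ (Fin.natAdd m s) := by
  simp only [Finset.prod_filter, Fin.prod_univ_add]

lemma Submodule.aeval_apply_mem {R V : Type*} [CommSemiring R] [AddCommMonoid V] [Module R V]
    {f : Module.End R V} {M : Submodule R V} (hM : ∀ x ∈ M, f x ∈ M) (P : Polynomial R)
    {x : V} (hx : x ∈ M) : Polynomial.aeval f P x ∈ M := by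
  induction P using Polynomial.induction_on generalizing x with
  | C a => simpa using M.smul_mem a hx
  | add P Q hP hQ => simpa using M.add_mem (hP hx) (hQ hx)
  | monomial n a h =>
    rw [pow_succ, ← mul_assoc, map_mul, Polynomial.aeval_X, Module.End.mul_apply]
    exact h (hM x hx)

lemma qq_pow_ne_one {k : ℕ} (hk : k ≠ 0) : qq ^ k ≠ 1 := by
  intro h
  have : (Polynomial.X ^ k : Polynomial ℚ) = 1 :=
    RatFunc.algebraMap_injective ℚ (by simpa [qq, RatFunc.algebraMap_X] using h)
  simpa [hk] using congrArg Polynomial.natDegree this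

section TensorPowers

variable {N ℓ ℓ₁ ℓ₂ : ℕ}

lemma qv_ne_zero (ε : Fin N → Bool) (p : Fin N) : qv ε p ≠ 0 := by
  unfold qv; split_ifs <;> simp [qq, RatFunc.X_ne_zero]

lemma qv_pow_ne_one (ε : Fin N → Bool) (p : Fin N) {k : ℕ} (hk : k ≠ 0) : qv ε p ^ k ≠ 1 := by
  unfold qv
  split_ifs
  · intro h
    refine qq_pow_ne_one (mul_ne_zero two_ne_zero hk) (inv_eq_one.mp ?_)
    calc (qq ^ (2 * k))⁻¹ = ((-qq⁻¹) ^ k) ^ 2 := by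
          rw [← pow_mul, mul_comm k, Even.neg_pow (even_two_mul k), inv_pow]
      _ = 1 := by rw [h, one_pow]
  · exact qq_pow_ne_one hk

lemma qhOpL_apply (ε : Fin N → Bool) (h : Fin N → ℤ) (g : Vl N ℓ) (μ : Fin ℓ → Fin N) :
    qhOpL N ℓ ε h g μ = (∏ t, qhEntry ε h (μ t)) * g μ := by
  simp [qhOpL, twoTerm]

lemma qhOpL_comm (ε : Fin N → Bool) (h h' : Fin N → ℤ) (g : Vl N ℓ) :
    qhOpL N ℓ ε h (qhOpL N ℓ ε h' g) = qhOpL N ℓ ε h' (qhOpL N ℓ ε h g) := by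
  funext μ; simp only [qhOpL_apply]; ring

lemma concatFn_zero_left (h : Vl N ℓ₂) : concatFn (0 : Vl N ℓ₁) h = 0 := by
  funext μ; simp [concatFn]

lemma concatFn_zero_right (g : Vl N ℓ₁) : concatFn g (0 : Vl N ℓ₂) = 0 := by
  funext μ; simp [concatFn]

lemma qhOpL_concatFn (ε : Fin N → Bool) (hq : Fin N → ℤ) (g : Vl N ℓ₁) (h : Vl N ℓ₂) :
    qhOpL N (ℓ₁ + ℓ₂) ε hq (concatFn g h) =
      concatFn (qhOpL N ℓ₁ ε hq g) (qhOpL N ℓ₂ ε hq h) := by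
  funext μ
  simp only [qhOpL_apply, concatFn, Fin.prod_univ_add]; ring

lemma qhOpL_mem_truncSub {ε : Fin N → Bool} {p : Fin N} (h : Fin N → ℤ) {g : Vl N ℓ}
    (hg : g ∈ truncSub N ℓ p) : qhOpL N ℓ ε h g ∈ truncSub N ℓ p := fun μ hμ => by
  rw [qhOpL_apply, hg μ hμ, mul_zero]

/-- `O` turns a letter `a` into `b`: `(O g) μ` only involves the values of `g` at the
multi-indices obtained from `μ` by changing one letter `b` into `a`. -/
def ShiftsLetter (O : Module.End K (Vl N ℓ)) (a b : Fin N) : Prop :=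
  ∀ g μ, (∀ t, μ t = b → g (Function.update μ t a) = 0) → O g μ = 0

namespace ShiftsLetter

variable {O O' : Module.End K (Vl N ℓ)} {a b p : Fin N} {g : Vl N ℓ}

lemma apply_mem_truncSub (hO : ShiftsLetter O a b) (hb : b ≠ p) (hg : g ∈ truncSub N ℓ p) :
    O g ∈ truncSub N ℓ p := by
  rintro μ ⟨s, hs⟩
  refine hO g μ fun t ht => hg _ ⟨s, ?_⟩
  rwa [Function.update_of_ne (by rintro rfl; exact hb (ht ▸ hs))]

lemma apply_eq_zero (hO : ShiftsLetter O p b) (hg : g ∈ truncSub N ℓ p) : O g = 0 :=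
  funext fun μ => hO g μ fun t _ => hg _ ⟨t, Function.update_self _ _ _⟩

lemma apply_apply_mem_truncSub (hO : ShiftsLetter O p b) (hb : b ≠ p)
    (hO' : ShiftsLetter O' a p) (hg : g ∈ truncSub N ℓ p) : O (O' g) ∈ truncSub N ℓ p := by
  rintro μ ⟨s, hs⟩
  refine hO _ μ fun t ht => hO' g _ fun t' _ => hg _ ?_
  have hts : t ≠ s := by rintro rfl; exact hb (ht ▸ hs)
  by_cases htt : t' = t
  · subst htt
    exact ⟨s, by rw [Function.update_of_ne hts.symm, Function.update_of_ne hts.symm, hs]⟩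
  · exact ⟨t, by rw [Function.update_of_ne (Ne.symm htt), Function.update_self]⟩

end ShiftsLetter

def letterCount (p : Fin N) (μ : Fin ℓ → Fin N) : ℕ := (Finset.univ.filter (μ · = p)).card

lemma letterCount_le (p : Fin N) (μ : Fin ℓ → Fin N) : letterCount p μ ≤ ℓ :=
  (Finset.card_filter_le _ _).trans_eq (Finset.card_fin ℓ)

lemma letterCount_eq_zero_iff {p : Fin N} {μ : Fin ℓ → Fin N} :
    letterCount p μ = 0 ↔ ∀ t, μ t ≠ p := by
  simp [letterCount, Finset.filter_eq_empty_iff]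

lemma qhOpL_ωexp (ε : Fin N → Bool) (p : Fin N) :
    qhOpL N ℓ ε (ωexp ε p) = Algebra.lmul K (Vl N ℓ) (fun μ => qv ε p ^ letterCount p μ) := by
  have hs : sgn ε p * sgn ε p = 1 := by unfold sgn; split_ifs <;> rfl
  refine LinearMap.ext fun g => funext fun μ => ?_
  simp only [qhOpL_apply, Algebra.coe_lmul_eq_mul, LinearMap.mul_apply', Pi.mul_apply]
  congr 1
  rw [letterCount, ← Finset.prod_const, Finset.prod_filter]
  refine Finset.prod_congr rfl fun t _ => ?_
  by_cases ht : μ t = p <;> simp [qhEntry, ωexp, ht, hs]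

def truncProj (p : Fin N) : Module.End K (Vl N ℓ) :=
  Algebra.lmul K (Vl N ℓ) (fun μ => if ∀ t, μ t ≠ p then 1 else 0)

lemma truncProj_apply (p : Fin N) (g : Vl N ℓ) (μ : Fin ℓ → Fin N) :
    truncProj p g μ = if ∀ t, μ t ≠ p then g μ else 0 := by
  simp [truncProj, Algebra.coe_lmul_eq_mul]

open Polynomial in
def truncPoly (ε : Fin N → Bool) (p : Fin N) (ℓ : ℕ) : K[X] :=
  ∏ k ∈ Finset.range ℓ, C (qv ε p ^ (k + 1) - 1)⁻¹ * (C (qv ε p ^ (k + 1)) - X)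

lemma truncPoly_eval (ε : Fin N → Bool) (p : Fin N) {c : ℕ} (hc : c ≤ ℓ) :
    (truncPoly ε p ℓ).eval (qv ε p ^ c) = if c = 0 then 1 else 0 := by
  simp only [truncPoly, Polynomial.eval_prod, Polynomial.eval_mul, Polynomial.eval_C,
    Polynomial.eval_sub, Polynomial.eval_X]
  split_ifs with h
  · subst h
    exact Finset.prod_eq_one fun k _ =>
      inv_mul_cancel₀ (sub_ne_zero.mpr (qv_pow_ne_one ε p k.succ_ne_zero))
  · obtain ⟨k, rfl⟩ := Nat.exists_eq_succ_of_ne_zero h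
    exact Finset.prod_eq_zero (Finset.mem_range.mpr hc) (by simp)

lemma truncProj_eq_aeval (ε : Fin N → Bool) (p : Fin N) :
    truncProj p = Polynomial.aeval (qhOpL N ℓ ε (ωexp ε p)) (truncPoly ε p ℓ) := by
  rw [qhOpL_ωexp, Polynomial.aeval_algHom_apply, truncProj]
  congr 1
  funext μ
  rw [Polynomial.aeval_pi_apply₂, Polynomial.coe_aeval_eq_eval,
    truncPoly_eval ε p (letterCount_le p μ)]
  simp only [letterCount_eq_zero_iff]

lemma truncProj_mem {ε : Fin N → Bool} {p : Fin N} {M : Submodule K (Vl N ℓ)}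
    (hM : ∀ g ∈ M, qhOpL N ℓ ε (ωexp ε p) g ∈ M) {g : Vl N ℓ} (hg : g ∈ M) :
    truncProj p g ∈ M := by
  rw [truncProj_eq_aeval ε]
  exact Submodule.aeval_apply_mem hM _ hg

lemma truncProj_mem_truncSub (p : Fin N) (g : Vl N ℓ) : truncProj p g ∈ truncSub N ℓ p := by
  rintro μ ⟨t, ht⟩
  rw [truncProj_apply, if_neg (not_forall.mpr ⟨t, not_not.mpr ht⟩)]

lemma truncProj_eq_self {p : Fin N} {g : Vl N ℓ} (hg : g ∈ truncSub N ℓ p) :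
    truncProj p g = g := by
  funext μ
  rw [truncProj_apply]
  split_ifs with h
  · rfl
  · exact (hg μ (by simpa using h)).symm

lemma truncProj_concatFn (p : Fin N) (g : Vl N ℓ₁) (h : Vl N ℓ₂) :
    truncProj p (concatFn g h) = concatFn (truncProj p g) (truncProj p h) := by
  funext μ
  simp only [truncProj_apply, concatFn, Fin.forall_fin_add]
  split_ifs <;> simp_all

lemma concatFn_mem_truncSub {p : Fin N} {g : Vl N ℓ₁} {h : Vl N ℓ₂}
    (hg : g ∈ truncSub N ℓ₁ p) (hh : h ∈ truncSub N ℓ₂ p) :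
    concatFn g h ∈ truncSub N (ℓ₁ + ℓ₂) p := by
  rw [← truncProj_eq_self hg, ← truncProj_eq_self hh, ← truncProj_concatFn]
  exact truncProj_mem_truncSub p _

lemma map_tensSpan_le {V : Submodule K (Vl N ℓ₁)} {W : Submodule K (Vl N ℓ₂)}
    {O : Module.End K (Vl N (ℓ₁ + ℓ₂))} {S : Submodule K (Vl N (ℓ₁ + ℓ₂))}
    (hO : ∀ g ∈ V, ∀ h ∈ W, O (concatFn g h) ∈ S) : (tensSpan V W).map O ≤ S :=
  (Submodule.map_span_le O _ S).mpr fun _ ⟨g, hg, h, hh, hx⟩ => hx ▸ hO g hg h hh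

lemma tensSpan_inf_truncSub {ε : Fin N → Bool} {p : Fin N} {V : Submodule K (Vl N ℓ₁)}
    {W : Submodule K (Vl N ℓ₂)} (hV : ∀ g ∈ V, qhOpL N ℓ₁ ε (ωexp ε p) g ∈ V)
    (hW : ∀ h ∈ W, qhOpL N ℓ₂ ε (ωexp ε p) h ∈ W) :
    tensSpan V W ⊓ truncSub N (ℓ₁ + ℓ₂) p =
      tensSpan (V ⊓ truncSub N ℓ₁ p) (W ⊓ truncSub N ℓ₂ p) := by
  refine le_antisymm ?_ (le_inf ?_ ?_)
  · rintro x ⟨hx, hxT⟩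
    rw [← truncProj_eq_self hxT]
    refine map_tensSpan_le (fun g hg h hh => ?_) (Submodule.mem_map_of_mem hx)
    rw [truncProj_concatFn]
    exact Submodule.subset_span ⟨_, ⟨truncProj_mem hV hg, truncProj_mem_truncSub p g⟩,
      _, ⟨truncProj_mem hW hh, truncProj_mem_truncSub p h⟩, rfl⟩
  · exact Submodule.span_mono fun _ ⟨g, hg, h, hh, hx⟩ => ⟨g, hg.1, h, hh.1, hx⟩
  · exact Submodule.span_le.mpr fun _ ⟨g, hg, h, hh, hx⟩ => hx ▸ concatFn_mem_truncSub hg.2 hh.2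

variable [NeZero N]

lemma eOpL_apply (ε : Fin N → Bool) (i : Fin N) (g : Vl N ℓ) (μ : Fin ℓ → Fin N) :
    eOpL N ℓ ε i g μ = ∑ t, if μ t = i - 1 then
      (∏ s ∈ Finset.univ.filter (· < t), kinvEntry ε i (μ s)) * g (Function.update μ t i)
      else 0 := by
  simp [eOpL, twoTerm, ite_mul]

lemma fOpL_apply (ε : Fin N → Bool) (i : Fin N) (g : Vl N ℓ) (μ : Fin ℓ → Fin N) :
    fOpL N ℓ ε i g μ = ∑ t, if μ t = i then
      (∏ s ∈ Finset.univ.filter (t < ·), kEntry ε i (μ s)) * g (Function.update μ t (i - 1))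
      else 0 := by
  simp [fOpL, twoTerm, ite_mul]

lemma eOpL_shiftsLetter (ε : Fin N → Bool) (i : Fin N) :
    ShiftsLetter (eOpL N ℓ ε i) i (i - 1) := fun g μ hg => by
  rw [eOpL_apply]
  exact Finset.sum_eq_zero fun t _ => ite_eq_right_iff.mpr fun ht => by rw [hg t ht, mul_zero]

lemma fOpL_shiftsLetter (ε : Fin N → Bool) (i : Fin N) :
    ShiftsLetter (fOpL N ℓ ε i) (i - 1) i := fun g μ hg => by
  rw [fOpL_apply]
  exact Finset.sum_eq_zero fun t _ => ite_eq_right_iff.mpr fun ht => by rw [hg t ht, mul_zero]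

lemma qhEntry_κe (ε : Fin N → Bool) (i r : Fin N) : qhEntry ε (κe ε i) r = kEntry ε i r := by
  have hq := qv_ne_zero ε r
  have hs : sgn ε r * sgn ε r = 1 := by unfold sgn; split_ifs <;> rfl
  unfold qhEntry kEntry κe ωexp
  by_cases h1 : r = i - 1 <;> by_cases h2 : r = i
  · simp only [Pi.sub_apply, if_pos h1, if_pos h2]
    rw [← h1, ← h2]; simp [hq]
  · subst h1; simp [h2, hs]
  · subst h2; simp [h1, hs]
  · simp [h1, h2]

lemma qhEntry_neg_κe (ε : Fin N → Bool) (i r : Fin N) :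
    qhEntry ε (-κe ε i) r = kinvEntry ε i r := by
  rw [show qhEntry ε (-κe ε i) r = (qhEntry ε (κe ε i) r)⁻¹ by simp [qhEntry, zpow_neg],
    qhEntry_κe]
  unfold kEntry kinvEntry; split_ifs <;> simp [mul_comm]

lemma kOpL_apply (ε : Fin N → Bool) (i : Fin N) (g : Vl N ℓ) (μ : Fin ℓ → Fin N) :
    kOpL N ℓ ε i g μ = (∏ t, kEntry ε i (μ t)) * g μ := by
  simp [kOpL, qhOpL_apply, qhEntry_κe]

lemma kinvOpL_apply (ε : Fin N → Bool) (i : Fin N) (g : Vl N ℓ) (μ : Fin ℓ → Fin N) :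
    kinvOpL N ℓ ε i g μ = (∏ t, kinvEntry ε i (μ t)) * g μ := by
  simp [kinvOpL, qhOpL_apply, qhEntry_neg_κe]

lemma kOpL_comm (ε : Fin N → Bool) (i i' : Fin N) (g : Vl N ℓ) :
    kOpL N ℓ ε i (kOpL N ℓ ε i' g) = kOpL N ℓ ε i' (kOpL N ℓ ε i g) :=
  qhOpL_comm ε _ _ g

lemma kOpL_concatFn (ε : Fin N → Bool) (i : Fin N) (g : Vl N ℓ₁) (h : Vl N ℓ₂) :
    kOpL N (ℓ₁ + ℓ₂) ε i (concatFn g h) = concatFn (kOpL N ℓ₁ ε i g) (kOpL N ℓ₂ ε i h) :=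
  qhOpL_concatFn ε _ g h

lemma eOpL_concatFn (ε : Fin N → Bool) (i : Fin N) (g : Vl N ℓ₁) (h : Vl N ℓ₂) :
    eOpL N (ℓ₁ + ℓ₂) ε i (concatFn g h) =
      concatFn (eOpL N ℓ₁ ε i g) h + concatFn (kinvOpL N ℓ₁ ε i g) (eOpL N ℓ₂ ε i h) := by
  funext μ
  simp only [Pi.add_apply, eOpL_apply, kinvOpL_apply, concatFn, Fin.sum_univ_add,
    Finset.sum_mul, Finset.mul_sum, Fin.prod_filter_univ_add,
    Function.update_comp_eq_of_injective' _ (Fin.castAdd_injective ℓ₁ ℓ₂),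
    Function.update_comp_eq_of_injective' _ (Fin.natAdd_injective ℓ₂ ℓ₁),
    Function.update_comp_eq_of_forall_ne' _ _ (Fin.castAdd_ne_natAdd · _),
    Function.update_comp_eq_of_forall_ne' _ _ (fun b => (Fin.castAdd_ne_natAdd _ b).symm)]
  congr 1 <;> refine Finset.sum_congr rfl fun t _ => ?_ <;> split_ifs <;>
    simp [Fin.castAdd_lt_castAdd_iff, Fin.castAdd_lt_natAdd, (Fin.castAdd_lt_natAdd _ _).not_gt] <;>
    ring

lemma fOpL_concatFn (ε : Fin N → Bool) (i : Fin N) (g : Vl N ℓ₁) (h : Vl N ℓ₂) :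
    fOpL N (ℓ₁ + ℓ₂) ε i (concatFn g h) =
      concatFn (fOpL N ℓ₁ ε i g) (kOpL N ℓ₂ ε i h) + concatFn g (fOpL N ℓ₂ ε i h) := by
  funext μ
  simp only [Pi.add_apply, fOpL_apply, kOpL_apply, concatFn, Fin.sum_univ_add,
    Finset.sum_mul, Finset.mul_sum, Fin.prod_filter_univ_add,
    Function.update_comp_eq_of_injective' _ (Fin.castAdd_injective ℓ₁ ℓ₂),
    Function.update_comp_eq_of_injective' _ (Fin.natAdd_injective ℓ₂ ℓ₁),
    Function.update_comp_eq_of_forall_ne' _ _ (Fin.castAdd_ne_natAdd · _),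
    Function.update_comp_eq_of_forall_ne' _ _ (fun b => (Fin.castAdd_ne_natAdd _ b).symm)]
  congr 1 <;> refine Finset.sum_congr rfl fun t _ => ?_ <;> split_ifs <;>
    simp [Fin.castAdd_lt_castAdd_iff, Fin.castAdd_lt_natAdd, (Fin.castAdd_lt_natAdd _ _).not_gt] <;>
    ring

/-- `M` is a `Ů(ε)`-submodule of `𝒱^{⊗ℓ}`. -/
structure IsUSubmodule (ε : Fin N → Bool) (M : Submodule K (Vl N ℓ)) : Prop where
  eOpL_mem : ∀ i, i ≠ 0 → ∀ g ∈ M, eOpL N ℓ ε i g ∈ M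
  fOpL_mem : ∀ i, i ≠ 0 → ∀ g ∈ M, fOpL N ℓ ε i g ∈ M
  qhOpL_mem : ∀ h, ∀ g ∈ M, qhOpL N ℓ ε h g ∈ M

lemma IsUSubmodule.tensSpan {ε : Fin N → Bool} {V : Submodule K (Vl N ℓ₁)}
    {W : Submodule K (Vl N ℓ₂)} (hV : IsUSubmodule ε V) (hW : IsUSubmodule ε W) :
    IsUSubmodule ε (_root_.tensSpan V W) := by
  have mem {g h} (hg : g ∈ V) (hh : h ∈ W) : concatFn g h ∈ _root_.tensSpan V W :=
    Submodule.subset_span ⟨g, hg, h, hh, rfl⟩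
  refine ⟨fun i hi x hx => map_tensSpan_le (fun g hg h hh => ?_) (Submodule.mem_map_of_mem hx),
    fun i hi x hx => map_tensSpan_le (fun g hg h hh => ?_) (Submodule.mem_map_of_mem hx),
    fun q x hx => map_tensSpan_le (fun g hg h hh => ?_) (Submodule.mem_map_of_mem hx)⟩
  · rw [eOpL_concatFn]
    exact add_mem (mem (hV.eOpL_mem i hi g hg) hh)
      (mem (hV.qhOpL_mem _ g hg) (hW.eOpL_mem i hi h hh))
  · rw [fOpL_concatFn]
    exact add_mem (mem (hV.fOpL_mem i hi g hg) (hW.qhOpL_mem _ h hh))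
      (mem hg (hW.fOpL_mem i hi h hh))
  · rw [qhOpL_concatFn]
    exact mem (hV.qhOpL_mem q g hg) (hW.qhOpL_mem q h hh)

end TensorPowers

section Folding

variable {n ℓ ℓ₁ ℓ₂ : ℕ} {ε : Fin (n + 1) → Bool} {p : Fin (n + 1)}

lemma eOpL_add_one_shiftsLetter : ShiftsLetter (eOpL (n + 1) ℓ ε (p + 1)) (p + 1) p := by
  simpa using eOpL_shiftsLetter (ℓ := ℓ) ε (p + 1)

lemma fOpL_add_one_shiftsLetter : ShiftsLetter (fOpL (n + 1) ℓ ε (p + 1)) p (p + 1) := by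
  simpa using fOpL_shiftsLetter (ℓ := ℓ) ε (p + 1)

lemma eOpL_qcomm_apply_of_mem_truncSub (c : K) {g : Vl (n + 1) ℓ}
    (hg : g ∈ truncSub (n + 1) ℓ p) :
    (eOpL (n + 1) ℓ ε p * eOpL (n + 1) ℓ ε (p + 1) -
        c • (eOpL (n + 1) ℓ ε (p + 1) * eOpL (n + 1) ℓ ε p)) g =
      eOpL (n + 1) ℓ ε p (eOpL (n + 1) ℓ ε (p + 1) g) := by
  simp [(eOpL_shiftsLetter ε p).apply_eq_zero hg]

lemma fOpL_qcomm_apply_of_mem_truncSub (c : K) {g : Vl (n + 1) ℓ}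
    (hg : g ∈ truncSub (n + 1) ℓ p) :
    (fOpL (n + 1) ℓ ε (p + 1) * fOpL (n + 1) ℓ ε p -
        c • (fOpL (n + 1) ℓ ε p * fOpL (n + 1) ℓ ε (p + 1))) g =
      fOpL (n + 1) ℓ ε (p + 1) (fOpL (n + 1) ℓ ε p g) := by
  simp [fOpL_add_one_shiftsLetter.apply_eq_zero hg]

lemma eOpL_eOpL_concatFn_of_mem_truncSub {g : Vl (n + 1) ℓ₁} {h : Vl (n + 1) ℓ₂}
    (hg : g ∈ truncSub (n + 1) ℓ₁ p) (hh : h ∈ truncSub (n + 1) ℓ₂ p) :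
    eOpL (n + 1) (ℓ₁ + ℓ₂) ε p (eOpL (n + 1) (ℓ₁ + ℓ₂) ε (p + 1) (concatFn g h)) =
      concatFn (eOpL (n + 1) ℓ₁ ε p (eOpL (n + 1) ℓ₁ ε (p + 1) g)) h +
        concatFn (kinvOpL (n + 1) ℓ₁ ε p (kinvOpL (n + 1) ℓ₁ ε (p + 1) g))
          (eOpL (n + 1) ℓ₂ ε p (eOpL (n + 1) ℓ₂ ε (p + 1) h)) := by
  have kill {ℓ} {x : Vl (n + 1) ℓ} (hx : x ∈ truncSub (n + 1) ℓ p) :=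
    (eOpL_shiftsLetter ε p).apply_eq_zero hx
  have hkg : kinvOpL (n + 1) ℓ₁ ε (p + 1) g ∈ truncSub (n + 1) ℓ₁ p := qhOpL_mem_truncSub _ hg
  rw [eOpL_concatFn, map_add, eOpL_concatFn, eOpL_concatFn, kill hh, kill hkg,
    concatFn_zero_left, concatFn_zero_right, add_zero, zero_add]

lemma fOpL_fOpL_concatFn_of_mem_truncSub {g : Vl (n + 1) ℓ₁} {h : Vl (n + 1) ℓ₂}
    (hg : g ∈ truncSub (n + 1) ℓ₁ p) (hh : h ∈ truncSub (n + 1) ℓ₂ p) :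
    fOpL (n + 1) (ℓ₁ + ℓ₂) ε (p + 1) (fOpL (n + 1) (ℓ₁ + ℓ₂) ε p (concatFn g h)) =
      concatFn (fOpL (n + 1) ℓ₁ ε (p + 1) (fOpL (n + 1) ℓ₁ ε p g))
          (kOpL (n + 1) ℓ₂ ε p (kOpL (n + 1) ℓ₂ ε (p + 1) h)) +
        concatFn g (fOpL (n + 1) ℓ₂ ε (p + 1) (fOpL (n + 1) ℓ₂ ε p h)) := by
  have kill {ℓ} {x : Vl (n + 1) ℓ} (hx : x ∈ truncSub (n + 1) ℓ p) :=
    (fOpL_add_one_shiftsLetter (ε := ε)).apply_eq_zero hx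
  have hkh : kOpL (n + 1) ℓ₂ ε p h ∈ truncSub (n + 1) ℓ₂ p := qhOpL_mem_truncSub _ hh
  rw [fOpL_concatFn, map_add, fOpL_concatFn, fOpL_concatFn, kill hg, kill hkh,
    concatFn_zero_left, concatFn_zero_right, add_zero, zero_add, kOpL_comm]

variable [NeZero n]

lemma eOpL_eOpL_mem_truncSub {g : Vl (n + 1) ℓ} (hg : g ∈ truncSub (n + 1) ℓ p) :
    eOpL (n + 1) ℓ ε p (eOpL (n + 1) ℓ ε (p + 1) g) ∈ truncSub (n + 1) ℓ p :=
  (eOpL_shiftsLetter ε p).apply_apply_mem_truncSub (by simp) eOpL_add_one_shiftsLetter hg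

lemma fOpL_fOpL_mem_truncSub {g : Vl (n + 1) ℓ} (hg : g ∈ truncSub (n + 1) ℓ p) :
    fOpL (n + 1) ℓ ε (p + 1) (fOpL (n + 1) ℓ ε p g) ∈ truncSub (n + 1) ℓ p :=
  fOpL_add_one_shiftsLetter.apply_apply_mem_truncSub (by simp) (fOpL_shiftsLetter ε p) hg

lemma foldComb_cases {j : Fin n} (hj : j ≠ 0) :
    (∃ i, i ≠ 0 ∧ i ≠ p ∧ i ≠ p + 1 ∧
      (∀ (V : Type) [AddCommGroup V] [Module K V] (e : Fin (n + 1) → Module.End K V),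
        foldCombE ε e p j = e i) ∧
      (∀ (V : Type) [AddCommGroup V] [Module K V] (f : Fin (n + 1) → Module.End K V),
        foldCombF ε f p j = f i) ∧
      (∀ (V : Type) [AddCommGroup V] [Module K V] (k : Fin (n + 1) → Module.End K V),
        foldCombK k p j = k i)) ∨
    (p ≠ 0 ∧ p + 1 ≠ 0 ∧
      (∀ (V : Type) [AddCommGroup V] [Module K V] (e : Fin (n + 1) → Module.End K V),
        foldCombE ε e p j = e p * e (p + 1) - Dc ε p (p + 1) • (e (p + 1) * e p)) ∧
      (∀ (V : Type) [AddCommGroup V] [Module K V] (f : Fin (n + 1) → Module.End K V),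
        foldCombF ε f p j = f (p + 1) * f p - (Dc ε p (p + 1))⁻¹ • (f p * f (p + 1))) ∧
      (∀ (V : Type) [AddCommGroup V] [Module K V] (k : Fin (n + 1) → Module.End K V),
        foldCombK k p j = k p * k (p + 1))) := by
  have hj0 : (j : ℕ) ≠ 0 := Fin.val_ne_zero_iff.mpr hj
  have hjn := j.isLt
  rcases lt_trichotomy (j : ℕ) p with hlt | heq | hgt
  · have hp0 : (p : ℕ) ≠ 0 := by omega
    refine .inl ⟨j.castSucc, ?_, ?_, ?_, ?_, ?_, ?_⟩
    · exact Fin.castSucc_ne_zero_iff.mpr hj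
    · rw [Ne, Fin.ext_iff, Fin.val_castSucc]; omega
    · rw [Ne, Fin.ext_iff, Fin.val_castSucc, Fin.val_add_one]; split_ifs <;> omega
    all_goals intros; simp [foldCombE, foldCombF, foldCombK, hp0, hj0, hlt]
  · have hp : p = j.castSucc := Fin.ext heq.symm
    subst hp
    refine .inr ⟨?_, ?_, ?_, ?_, ?_⟩
    · exact Fin.castSucc_ne_zero_iff.mpr hj
    · rw [Fin.coeSucc_eq_succ]; exact Fin.succ_ne_zero j
    all_goals intros; simp [foldCombE, foldCombF, foldCombK, hj0, hjn.ne, Fin.coeSucc_eq_succ]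
  · have hpn : (p : ℕ) ≠ n := by omega
    refine .inl ⟨j.succ, Fin.succ_ne_zero j, ?_, ?_, ?_, ?_, ?_⟩
    · rw [Ne, Fin.ext_iff, Fin.val_succ]; omega
    · rw [Ne, Fin.ext_iff, Fin.val_succ, Fin.val_add_one]; split_ifs
      · exact not_false
      · omega
    all_goals intros; simp [foldCombE, foldCombF, foldCombK, hpn, hj0, hgt.not_gt, hgt.ne']

lemma foldComb_mem_truncSub {j : Fin n} (hj : j ≠ 0)
    {g : Vl (n + 1) ℓ} (hg : g ∈ truncSub (n + 1) ℓ p) :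
    foldCombE ε (eOpL (n + 1) ℓ ε) p j g ∈ truncSub (n + 1) ℓ p ∧
      foldCombF ε (fOpL (n + 1) ℓ ε) p j g ∈ truncSub (n + 1) ℓ p ∧
      foldCombK (kOpL (n + 1) ℓ ε) p j g ∈ truncSub (n + 1) ℓ p := by
  rcases foldComb_cases (ε := ε) (p := p) hj with ⟨i, -, hip, hip1, hE, hF, hK⟩ | ⟨-, -, hE, hF, hK⟩
  · rw [hE, hF, hK]
    exact ⟨(eOpL_shiftsLetter ε i).apply_mem_truncSub (fun h => hip1 (sub_eq_iff_eq_add.mp h)) hg,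
      (fOpL_shiftsLetter ε i).apply_mem_truncSub hip hg, qhOpL_mem_truncSub _ hg⟩
  · rw [hE, hF, hK, eOpL_qcomm_apply_of_mem_truncSub _ hg, fOpL_qcomm_apply_of_mem_truncSub _ hg]
    exact ⟨eOpL_eOpL_mem_truncSub hg, fOpL_fOpL_mem_truncSub hg,
      qhOpL_mem_truncSub _ (qhOpL_mem_truncSub _ hg)⟩

lemma IsUSubmodule.foldComb_mem {M : Submodule K (Vl (n + 1) ℓ)} (hM : IsUSubmodule ε M)
    {j : Fin n} (hj : j ≠ 0) {g : Vl (n + 1) ℓ} (hg : g ∈ M) :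
    foldCombE ε (eOpL (n + 1) ℓ ε) p j g ∈ M ∧ foldCombF ε (fOpL (n + 1) ℓ ε) p j g ∈ M ∧
      foldCombK (kOpL (n + 1) ℓ ε) p j g ∈ M := by
  rcases foldComb_cases (ε := ε) (p := p) hj with ⟨i, hi, -, -, hE, hF, hK⟩ | ⟨hp, hp1, hE, hF, hK⟩
  · rw [hE, hF, hK]
    exact ⟨hM.eOpL_mem i hi g hg, hM.fOpL_mem i hi g hg, hM.qhOpL_mem _ g hg⟩
  · have e_mem {i} (hi : i ≠ 0) {x} (hx : x ∈ M) := hM.eOpL_mem i hi x hx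
    have f_mem {i} (hi : i ≠ 0) {x} (hx : x ∈ M) := hM.fOpL_mem i hi x hx
    rw [hE, hF, hK]
    simp only [LinearMap.sub_apply, LinearMap.smul_apply, Module.End.mul_apply]
    exact ⟨M.sub_mem (e_mem hp (e_mem hp1 hg)) (M.smul_mem _ (e_mem hp1 (e_mem hp hg))),
      M.sub_mem (f_mem hp1 (f_mem hp hg)) (M.smul_mem _ (f_mem hp (f_mem hp1 hg))),
      hM.qhOpL_mem _ _ (hM.qhOpL_mem _ g hg)⟩

lemma IsUSubmodule.foldComb_mem_inf_truncSub {M : Submodule K (Vl (n + 1) ℓ)}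
    (hM : IsUSubmodule ε M) :
    ∀ j : Fin n, j ≠ 0 → ∀ g ∈ M ⊓ truncSub (n + 1) ℓ p,
      foldCombE ε (eOpL (n + 1) ℓ ε) p j g ∈ M ⊓ truncSub (n + 1) ℓ p ∧
      foldCombF ε (fOpL (n + 1) ℓ ε) p j g ∈ M ⊓ truncSub (n + 1) ℓ p ∧
      foldCombK (kOpL (n + 1) ℓ ε) p j g ∈ M ⊓ truncSub (n + 1) ℓ p := fun _ hj _ hg =>
  let ⟨hE, hF, hK⟩ := hM.foldComb_mem (p := p) hj hg.1
  let ⟨tE, tF, tK⟩ := foldComb_mem_truncSub (ε := ε) hj hg.2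
  ⟨⟨hE, tE⟩, ⟨hF, tF⟩, ⟨hK, tK⟩⟩

lemma foldComb_concatFn {j : Fin n} (hj : j ≠ 0)
    {g : Vl (n + 1) ℓ₁} {h : Vl (n + 1) ℓ₂}
    (hg : g ∈ truncSub (n + 1) ℓ₁ p) (hh : h ∈ truncSub (n + 1) ℓ₂ p) :
    foldCombE ε (eOpL (n + 1) (ℓ₁ + ℓ₂) ε) p j (concatFn g h) =
        concatFn (foldCombE ε (eOpL (n + 1) ℓ₁ ε) p j g) h +
          concatFn (foldCombK (kinvOpL (n + 1) ℓ₁ ε) p j g)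
            (foldCombE ε (eOpL (n + 1) ℓ₂ ε) p j h) ∧
      foldCombF ε (fOpL (n + 1) (ℓ₁ + ℓ₂) ε) p j (concatFn g h) =
        concatFn (foldCombF ε (fOpL (n + 1) ℓ₁ ε) p j g)
            (foldCombK (kOpL (n + 1) ℓ₂ ε) p j h) +
          concatFn g (foldCombF ε (fOpL (n + 1) ℓ₂ ε) p j h) ∧
      foldCombK (kOpL (n + 1) (ℓ₁ + ℓ₂) ε) p j (concatFn g h) =
        concatFn (foldCombK (kOpL (n + 1) ℓ₁ ε) p j g)
          (foldCombK (kOpL (n + 1) ℓ₂ ε) p j h) := by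
  rcases foldComb_cases (ε := ε) (p := p) hj with ⟨i, -, -, -, hE, hF, hK⟩ | ⟨-, -, hE, hF, hK⟩
  · simp only [hE, hF, hK]
    exact ⟨eOpL_concatFn .., fOpL_concatFn .., qhOpL_concatFn ..⟩
  · have hgh := concatFn_mem_truncSub hg hh
    simp only [hE, hF, hK, Module.End.mul_apply, eOpL_qcomm_apply_of_mem_truncSub _ hg,
      eOpL_qcomm_apply_of_mem_truncSub _ hh, eOpL_qcomm_apply_of_mem_truncSub _ hgh,
      fOpL_qcomm_apply_of_mem_truncSub _ hg, fOpL_qcomm_apply_of_mem_truncSub _ hh,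
      fOpL_qcomm_apply_of_mem_truncSub _ hgh]
    exact ⟨eOpL_eOpL_concatFn_of_mem_truncSub hg hh, fOpL_fOpL_concatFn_of_mem_truncSub hg hh,
      by rw [kOpL_concatFn, kOpL_concatFn]⟩

end Folding

theorem truncation_of_tensor_product_general (n' : ℕ) [NeZero n']
    (ε : Fin (n' + 1) → Bool) (p : Fin (n' + 1))
    (ℓ₁ ℓ₂ : ℕ) (V : Submodule K (Vl (n' + 1) ℓ₁)) (W : Submodule K (Vl (n' + 1) ℓ₂))
    (hV : ∀ i : Fin (n' + 1), i ≠ 0 → ∀ g ∈ V,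
      eOpL (n' + 1) ℓ₁ ε i g ∈ V ∧ fOpL (n' + 1) ℓ₁ ε i g ∈ V)
    (hVh : ∀ h : Fin (n' + 1) → ℤ, ∀ g ∈ V, qhOpL (n' + 1) ℓ₁ ε h g ∈ V)
    (hW : ∀ i : Fin (n' + 1), i ≠ 0 → ∀ g ∈ W,
      eOpL (n' + 1) ℓ₂ ε i g ∈ W ∧ fOpL (n' + 1) ℓ₂ ε i g ∈ W)
    (hWh : ∀ h : Fin (n' + 1) → ℤ, ∀ g ∈ W, qhOpL (n' + 1) ℓ₂ ε h g ∈ W) :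
    -- (1) stability of the truncations under `E_j, F_j, K_j` (`j ≠ 0`)
    (∀ j : Fin n', j ≠ 0 → ∀ g ∈ V ⊓ truncSub (n' + 1) ℓ₁ p,
      foldCombE ε (eOpL (n' + 1) ℓ₁ ε) p j g ∈ V ⊓ truncSub (n' + 1) ℓ₁ p ∧
      foldCombF ε (fOpL (n' + 1) ℓ₁ ε) p j g ∈ V ⊓ truncSub (n' + 1) ℓ₁ p ∧
      foldCombK (kOpL (n' + 1) ℓ₁ ε) p j g ∈ V ⊓ truncSub (n' + 1) ℓ₁ p) ∧
    (∀ j : Fin n', j ≠ 0 → ∀ g ∈ W ⊓ truncSub (n' + 1) ℓ₂ p,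
      foldCombE ε (eOpL (n' + 1) ℓ₂ ε) p j g ∈ W ⊓ truncSub (n' + 1) ℓ₂ p ∧
      foldCombF ε (fOpL (n' + 1) ℓ₂ ε) p j g ∈ W ⊓ truncSub (n' + 1) ℓ₂ p ∧
      foldCombK (kOpL (n' + 1) ℓ₂ ε) p j g ∈ W ⊓ truncSub (n' + 1) ℓ₂ p) ∧
    (∀ j : Fin n', j ≠ 0 → ∀ g ∈ tensSpan V W ⊓ truncSub (n' + 1) (ℓ₁ + ℓ₂) p,
      foldCombE ε (eOpL (n' + 1) (ℓ₁ + ℓ₂) ε) p j g ∈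
        tensSpan V W ⊓ truncSub (n' + 1) (ℓ₁ + ℓ₂) p ∧
      foldCombF ε (fOpL (n' + 1) (ℓ₁ + ℓ₂) ε) p j g ∈
        tensSpan V W ⊓ truncSub (n' + 1) (ℓ₁ + ℓ₂) p ∧
      foldCombK (kOpL (n' + 1) (ℓ₁ + ℓ₂) ε) p j g ∈
        tensSpan V W ⊓ truncSub (n' + 1) (ℓ₁ + ℓ₂) p) ∧
    -- (2) `tr^ε_{ε'}(V ⊗ W) = tr^ε_{ε'}(V) ⊗ tr^ε_{ε'}(W)` ...
    (tensSpan V W ⊓ truncSub (n' + 1) (ℓ₁ + ℓ₂) p =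
      tensSpan (V ⊓ truncSub (n' + 1) ℓ₁ p) (W ⊓ truncSub (n' + 1) ℓ₂ p)) ∧
    -- ... compatibly with the `Ů(ε')`-actions (tensor product rule via `Δ`)
    (∀ j : Fin n', j ≠ 0 → ∀ g ∈ V ⊓ truncSub (n' + 1) ℓ₁ p,
      ∀ h ∈ W ⊓ truncSub (n' + 1) ℓ₂ p,
      foldCombE ε (eOpL (n' + 1) (ℓ₁ + ℓ₂) ε) p j (concatFn g h) =
        concatFn (foldCombE ε (eOpL (n' + 1) ℓ₁ ε) p j g) h +
          concatFn (foldCombK (kinvOpL (n' + 1) ℓ₁ ε) p j g)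
            (foldCombE ε (eOpL (n' + 1) ℓ₂ ε) p j h) ∧
      foldCombF ε (fOpL (n' + 1) (ℓ₁ + ℓ₂) ε) p j (concatFn g h) =
        concatFn (foldCombF ε (fOpL (n' + 1) ℓ₁ ε) p j g)
            (foldCombK (kOpL (n' + 1) ℓ₂ ε) p j h) +
          concatFn g (foldCombF ε (fOpL (n' + 1) ℓ₂ ε) p j h) ∧
      foldCombK (kOpL (n' + 1) (ℓ₁ + ℓ₂) ε) p j (concatFn g h) =
        concatFn (foldCombK (kOpL (n' + 1) ℓ₁ ε) p j g)
          (foldCombK (kOpL (n' + 1) ℓ₂ ε) p j h)) := by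
  have hVU : IsUSubmodule ε V :=
    ⟨fun i hi g hg => (hV i hi g hg).1, fun i hi g hg => (hV i hi g hg).2, hVh⟩
  have hWU : IsUSubmodule ε W :=
    ⟨fun i hi g hg => (hW i hi g hg).1, fun i hi g hg => (hW i hi g hg).2, hWh⟩
  exact ⟨hVU.foldComb_mem_inf_truncSub, hWU.foldComb_mem_inf_truncSub,
    (hVU.tensSpan hWU).foldComb_mem_inf_truncSub, tensSpan_inf_truncSub (hVh _) (hWh _),
    fun _ hj _ hg _ hh => foldComb_concatFn hj hg.2 hh.2⟩

/-- **Corollary 4.6 (Kwon–Yu)**: let `ε'` be obtained from `ε` by deleting the entry at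
position `p`, and let `V ⊆ 𝒱^{⊗ℓ₁}`, `W ⊆ 𝒱^{⊗ℓ₂}` be `Ů(ε)`-submodules.  Then
(1) `tr^ε_{ε'}(V)`, `tr^ε_{ε'}(W)` and `tr^ε_{ε'}(V ⊗ W)` are `Ů(ε')`-modules via the
folding homomorphism `φ` (i.e. stable under the operators `E_j, F_j, K_j`, `j ≠ 0`), and
(2) `tr^ε_{ε'}(V ⊗ W) ≅ tr^ε_{ε'}(V) ⊗ tr^ε_{ε'}(W)` as `Ů(ε')`-modules: the two
subspaces of `𝒱^{⊗(ℓ₁+ℓ₂)}` coincide, and the `Ů(ε')`-action on the left is the tensor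
product action (via the comultiplication) of the actions on the two truncated factors. -/
theorem truncation_of_tensor_product (n' : ℕ) [NeZero n'] (hn : 4 ≤ n' + 1)
    (ε : Fin (n' + 1) → Bool) (p : Fin (n' + 1)) (ε' : Fin n' → Bool)
    (hε' : ∀ j : Fin n', ε' j = ε (if (j : ℕ) < (p : ℕ) then j.castSucc else j.succ))
    (hhom : n' + 1 = 4 → ∀ j j' : Fin n', ε' j = ε' j')
    (ℓ₁ ℓ₂ : ℕ) (V : Submodule K (Vl (n' + 1) ℓ₁)) (W : Submodule K (Vl (n' + 1) ℓ₂))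
    (hV : ∀ i : Fin (n' + 1), i ≠ 0 → ∀ g ∈ V,
      eOpL (n' + 1) ℓ₁ ε i g ∈ V ∧ fOpL (n' + 1) ℓ₁ ε i g ∈ V)
    (hVh : ∀ h : Fin (n' + 1) → ℤ, ∀ g ∈ V, qhOpL (n' + 1) ℓ₁ ε h g ∈ V)
    (hW : ∀ i : Fin (n' + 1), i ≠ 0 → ∀ g ∈ W,
      eOpL (n' + 1) ℓ₂ ε i g ∈ W ∧ fOpL (n' + 1) ℓ₂ ε i g ∈ W)
    (hWh : ∀ h : Fin (n' + 1) → ℤ, ∀ g ∈ W, qhOpL (n' + 1) ℓ₂ ε h g ∈ W) :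
    -- (1) stability of the truncations under `E_j, F_j, K_j` (`j ≠ 0`)
    (∀ j : Fin n', j ≠ 0 → ∀ g ∈ V ⊓ truncSub (n' + 1) ℓ₁ p,
      foldCombE ε (eOpL (n' + 1) ℓ₁ ε) p j g ∈ V ⊓ truncSub (n' + 1) ℓ₁ p ∧
      foldCombF ε (fOpL (n' + 1) ℓ₁ ε) p j g ∈ V ⊓ truncSub (n' + 1) ℓ₁ p ∧
      foldCombK (kOpL (n' + 1) ℓ₁ ε) p j g ∈ V ⊓ truncSub (n' + 1) ℓ₁ p) ∧
    (∀ j : Fin n', j ≠ 0 → ∀ g ∈ W ⊓ truncSub (n' + 1) ℓ₂ p,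
      foldCombE ε (eOpL (n' + 1) ℓ₂ ε) p j g ∈ W ⊓ truncSub (n' + 1) ℓ₂ p ∧
      foldCombF ε (fOpL (n' + 1) ℓ₂ ε) p j g ∈ W ⊓ truncSub (n' + 1) ℓ₂ p ∧
      foldCombK (kOpL (n' + 1) ℓ₂ ε) p j g ∈ W ⊓ truncSub (n' + 1) ℓ₂ p) ∧
    (∀ j : Fin n', j ≠ 0 → ∀ g ∈ tensSpan V W ⊓ truncSub (n' + 1) (ℓ₁ + ℓ₂) p,
      foldCombE ε (eOpL (n' + 1) (ℓ₁ + ℓ₂) ε) p j g ∈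
        tensSpan V W ⊓ truncSub (n' + 1) (ℓ₁ + ℓ₂) p ∧
      foldCombF ε (fOpL (n' + 1) (ℓ₁ + ℓ₂) ε) p j g ∈
        tensSpan V W ⊓ truncSub (n' + 1) (ℓ₁ + ℓ₂) p ∧
      foldCombK (kOpL (n' + 1) (ℓ₁ + ℓ₂) ε) p j g ∈
        tensSpan V W ⊓ truncSub (n' + 1) (ℓ₁ + ℓ₂) p) ∧
    -- (2) `tr^ε_{ε'}(V ⊗ W) = tr^ε_{ε'}(V) ⊗ tr^ε_{ε'}(W)` ...
    (tensSpan V W ⊓ truncSub (n' + 1) (ℓ₁ + ℓ₂) p =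
      tensSpan (V ⊓ truncSub (n' + 1) ℓ₁ p) (W ⊓ truncSub (n' + 1) ℓ₂ p)) ∧
    -- ... compatibly with the `Ů(ε')`-actions (tensor product rule via `Δ`)
    (∀ j : Fin n', j ≠ 0 → ∀ g ∈ V ⊓ truncSub (n' + 1) ℓ₁ p,
      ∀ h ∈ W ⊓ truncSub (n' + 1) ℓ₂ p,
      foldCombE ε (eOpL (n' + 1) (ℓ₁ + ℓ₂) ε) p j (concatFn g h) =
        concatFn (foldCombE ε (eOpL (n' + 1) ℓ₁ ε) p j g) h +
          concatFn (foldCombK (kinvOpL (n' + 1) ℓ₁ ε) p j g)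
            (foldCombE ε (eOpL (n' + 1) ℓ₂ ε) p j h) ∧
      foldCombF ε (fOpL (n' + 1) (ℓ₁ + ℓ₂) ε) p j (concatFn g h) =
        concatFn (foldCombF ε (fOpL (n' + 1) ℓ₁ ε) p j g)
            (foldCombK (kOpL (n' + 1) ℓ₂ ε) p j h) +
          concatFn g (foldCombF ε (fOpL (n' + 1) ℓ₂ ε) p j h) ∧
      foldCombK (kOpL (n' + 1) (ℓ₁ + ℓ₂) ε) p j (concatFn g h) =
        concatFn (foldCombK (kOpL (n' + 1) ℓ₁ ε) p j g)
          (foldCombK (kOpL (n' + 1) ℓ₂ ε) p j h)) :=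
  truncation_of_tensor_product_general n' ε p ℓ₁ ℓ₂ V W hV hVh hW hWh
end
end
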